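/- arXiv:2107.00442 — 10 statements merged into one kernel-verified Lean document; each statement's English description precedes it below -/
import Mathlib

section
/- For every natural number n, the Catalan number C_n is odd if and only if n = 2^k − 1 for some natural number k; equivalently, C_n mod 2 equals the Rueppel sequence r_n. -/
open scoped Classical

private lemma zmod2_add_self (x : ZMod 2) : x + x = 0 := by revert x; decide

private lemma zmod2_mul_self (x : ZMod 2) : x * x = x := by revert x; decide

private lemma sum_symm_even (n : ℕ) (f : ℕ → ZMod 2) (hf : ∀ i, i ≤ 2*n → f (2*n - i) = f i) :
    ∑ i ∈ Finset.range (2*n+1), f i = f n := by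
  have hn : n ∈ Finset.range (2*n+1) := by simp; omega
  rw [← Finset.add_sum_erase _ f hn]
  have h0 : ∑ i ∈ (Finset.range (2*n+1)).erase n, f i = 0 := by
    apply Finset.sum_involution (fun a _ => 2*n - a)
    · intro a ha
      obtain ⟨hne, hr⟩ := Finset.mem_erase.mp ha
      have hr' := Finset.mem_range.mp hr
      rw [hf a (by omega)]
      exact zmod2_add_self _
    · intro a ha _
      obtain ⟨hne, hr⟩ := Finset.mem_erase.mp ha
      have hr' := Finset.mem_range.mp hr
      omega
    · intro a ha
      obtain ⟨hne, hr⟩ := Finset.mem_erase.mp ha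
      have hr' := Finset.mem_range.mp hr
      simp only [Finset.mem_erase, Finset.mem_range]
      omega
    · intro a ha
      obtain ⟨hne, hr⟩ := Finset.mem_erase.mp ha
      have hr' := Finset.mem_range.mp hr
      omega
  rw [h0, add_zero]

private lemma sum_symm_odd (n : ℕ) (f : ℕ → ZMod 2)
    (hf : ∀ i, i ≤ 2*n+1 → f (2*n+1 - i) = f i) :
    ∑ i ∈ Finset.range (2*n+2), f i = 0 := by
  apply Finset.sum_involution (fun a _ => 2*n+1 - a)
  · intro a ha
    have hr := Finset.mem_range.mp ha
    rw [hf a (by omega)]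
    exact zmod2_add_self _
  · intro a ha _
    have hr := Finset.mem_range.mp ha
    omega
  · intro a ha
    have hr := Finset.mem_range.mp ha
    simp only [Finset.mem_range]
    omega
  · intro a ha
    have hr := Finset.mem_range.mp ha
    omega

private lemma exists_shift (t : ℕ) :
    (∃ k : ℕ, 2*t+1 = 2 ^ k - 1) ↔ (∃ k : ℕ, t = 2 ^ k - 1) := by
  constructor
  · rintro ⟨k, hk⟩
    match k with
    | 0 => omega
    | j+1 =>
      refine ⟨j, ?_⟩
      have h1 : 1 ≤ 2 ^ j := Nat.one_le_two_pow
      have : (2:ℕ) ^ (j+1) = 2 * 2 ^ j := by ring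
      omega
  · rintro ⟨j, hj⟩
    refine ⟨j+1, ?_⟩
    have h1 : 1 ≤ 2 ^ j := Nat.one_le_two_pow
    have : (2:ℕ) ^ (j+1) = 2 * 2 ^ j := by ring
    omega

private lemma not_exists_even (t : ℕ) : ¬ (∃ k : ℕ, 2*t+2 = 2 ^ k - 1) := by
  rintro ⟨k, hk⟩
  match k with
  | 0 => omega
  | j+1 =>
    have h1 : 1 ≤ 2 ^ j := Nat.one_le_two_pow
    have : (2:ℕ) ^ (j+1) = 2 * 2 ^ j := by ring
    omega

private lemma catalan_zmod (n : ℕ) :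
    (catalan n : ZMod 2) = if ∃ k : ℕ, n = 2 ^ k - 1 then 1 else 0 := by
  induction n using Nat.strong_induction_on with
  | _ n ih =>
    match n with
    | 0 =>
      rw [catalan_zero, if_pos ⟨0, rfl⟩]
      norm_num
    | m+1 =>
      have hsum : (catalan (m+1) : ZMod 2)
          = ∑ i ∈ Finset.range (m+1), (catalan i : ZMod 2) * (catalan (m - i) : ZMod 2) := by
        rw [catalan_succ]
        push_cast
        exact Fin.sum_univ_eq_sum_range (fun i => (catalan i : ZMod 2) * (catalan (m - i) : ZMod 2)) (m+1)
      have hsymm : ∀ i, i ≤ m →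
          (catalan (m - i) : ZMod 2) * (catalan (m - (m - i)) : ZMod 2)
            = (catalan i : ZMod 2) * (catalan (m - i) : ZMod 2) := by
        intro i hi
        rw [Nat.sub_sub_self hi, mul_comm]
      rcases Nat.even_or_odd m with ⟨t, ht⟩ | ⟨t, ht⟩
      · -- m = 2t, n = 2t+1
        subst ht
        have hm : t + t = 2 * t := by ring
        rw [hsum]
        have := sum_symm_even t (fun i => (catalan i : ZMod 2) * (catalan (t + t - i) : ZMod 2))
          (by intro i hi; simpa [← hm] using hsymm i (by omega))
        rw [show t + t + 1 = 2*t + 1 by ring] at *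
        rw [this]
        rw [show t + t - t = t by omega, zmod2_mul_self]
        rw [ih t (by omega)]
        have hiff := exists_shift t
        split_ifs with h1 h2 h2
        · rfl
        · exact absurd (hiff.mpr h1) h2
        · exact absurd (hiff.mp h2) h1
        · rfl
      · -- m = 2t+1, n = 2t+2
        subst ht
        rw [hsum]
        have := sum_symm_odd t (fun i => (catalan i : ZMod 2) * (catalan (2*t+1 - i) : ZMod 2))
          (by intro i hi; exact hsymm i (by omega))
        rw [show 2*t + 1 + 1 = 2*t + 2 by ring] at *
        rw [this]
        rw [if_neg (not_exists_even t)]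

/-- The Catalan number `C_n` is odd iff `n = 2^k - 1` for some `k`; equivalently,
`C_n mod 2` equals the Rueppel sequence. -/
theorem catalan_odd_iff_rueppel (n : ℕ) :
    (Odd (catalan n) ↔ ∃ k : ℕ, n = 2 ^ k - 1) ∧
      catalan n % 2 = (if ∃ k : ℕ, n = 2 ^ k - 1 then 1 else 0) := by
  have hz := catalan_zmod n
  have hcast : ((catalan n % 2 : ℕ) : ZMod 2) = (catalan n : ZMod 2) := ZMod.natCast_mod _ 2
  have hmod : catalan n % 2 = if ∃ k : ℕ, n = 2 ^ k - 1 then 1 else 0 := by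
    rcases Nat.mod_two_eq_zero_or_one (catalan n) with h | h
    · rw [h] at hcast
      split_ifs at hz ⊢ with hc
      · rw [hz] at hcast
        norm_num at hcast
      · exact h
    · rw [h] at hcast
      split_ifs at hz ⊢ with hc
      · exact h
      · rw [hz] at hcast
        norm_num at hcast
  refine ⟨?_, hmod⟩
  rw [Nat.odd_iff, hmod]
  split_ifs with h
  · simp [h]
  · simp [h]
end

section
/- For every natural number n, the determinant of the (n+1)×(n+1) matrix whose (i,j) entry is the Catalan number C_{i+j} (for 0 ≤ i, j ≤ n) equals 1. -/
/-- `bal n k` = number of nonnegative lattice paths of `n` ±1 steps from 0 ending at height `k`. -/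
def bal : ℕ → ℕ → ℕ
  | 0, 0 => 1
  | 0, _ + 1 => 0
  | n + 1, 0 => bal n 1
  | n + 1, k + 1 => bal n k + bal n (k + 2)

lemma bal_eq_zero_of_lt : ∀ n k, n < k → bal n k = 0
  | 0, 0, h => absurd h (lt_irrefl 0)
  | 0, _ + 1, _ => rfl
  | n + 1, 0, h => absurd h (Nat.not_lt_zero _)
  | n + 1, k + 1, h => by
      simp [bal, bal_eq_zero_of_lt n k (by omega), bal_eq_zero_of_lt n (k + 2) (by omega)]

lemma bal_eq_zero_of_odd : ∀ n k, (n + k) % 2 = 1 → bal n k = 0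
  | 0, 0, h => by omega
  | 0, _ + 1, _ => rfl
  | n + 1, 0, h => by
      have := bal_eq_zero_of_odd n 1 (by omega)
      simpa [bal]
  | n + 1, k + 1, h => by
      simp [bal, bal_eq_zero_of_odd n k (by omega), bal_eq_zero_of_odd n (k + 2) (by omega)]

lemma bal_self : ∀ n, bal n n = 1
  | 0 => rfl
  | n + 1 => by
      simp [bal, bal_self n, bal_eq_zero_of_lt n (n + 2) (by omega)]
lemma bal_add_choose : ∀ n k, (n + k) % 2 = 0 →
    bal n k + Nat.choose n ((n + k) / 2 + 1) = Nat.choose n ((n + k) / 2)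
  | 0, 0, _ => rfl
  | 0, k + 1, h => by
      have hk : (0 + (k + 1)) / 2 ≥ 1 := by omega
      simp [bal, Nat.choose_eq_zero_of_lt (by omega : (0:ℕ) < (0 + (k+1))/2),
        Nat.choose_eq_zero_of_lt (by omega : (0:ℕ) < (0 + (k+1))/2 + 1),
        Nat.choose_eq_zero_of_lt (by omega : (0:ℕ) < (k+1)/2)]
  | n + 1, 0, h => by
      -- n odd, h' = (n+1)/2 ≥ 1
      set m := (n + 1 + 0) / 2 with hm
      have hn : n = 2 * m - 1 := by omega
      have hm1 : 1 ≤ m := by omega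
      have ih := bal_add_choose n 1 (by omega)
      have he : (n + 1) / 2 = m := by omega
      rw [show (n + 1 + 0) = n + 1 by ring] at hm
      have hsymm : Nat.choose n m = Nat.choose n (m - 1) := by
        have := Nat.choose_symm (show m ≤ n by omega) (n := n) (k := m)
        rw [show n - m = m - 1 by omega] at this
        omega
      have hp1 : Nat.choose (n + 1) (m + 1) = Nat.choose n m + Nat.choose n (m + 1) :=
        Nat.choose_succ_succ n m
      have hp2 : Nat.choose (n + 1) m = Nat.choose n (m - 1) + Nat.choose n m := by
        rw [show m = (m - 1) + 1 by omega]
        exact Nat.choose_succ_succ n (m - 1)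
      have hb : bal (n + 1) 0 = bal n 1 := rfl
      have hi : (n + 1) / 2 = m := he
      rw [show (n + 1) / 2 = m from he] at ih
      omega
  | n + 1, k + 1, h => by
      set m := (n + k) / 2 with hm
      have ih1 := bal_add_choose n k (by omega)
      have ih2 := bal_add_choose n (k + 2) (by omega)
      rw [show (n + k) / 2 = m from rfl] at ih1
      rw [show (n + (k + 2)) / 2 = m + 1 from by omega] at ih2
      have he : (n + 1 + (k + 1)) / 2 = m + 1 := by omega
      rw [he]
      have hp1 : Nat.choose (n + 1) (m + 1 + 1) = Nat.choose n (m + 1) + Nat.choose n (m + 1 + 1) :=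
        Nat.choose_succ_succ n (m + 1)
      have hp2 : Nat.choose (n + 1) (m + 1) = Nat.choose n m + Nat.choose n (m + 1) :=
        Nat.choose_succ_succ n m
      have hb : bal (n + 1) (k + 1) = bal n k + bal n (k + 2) := rfl
      omega
lemma catalan_add_choose (m : ℕ) :
    catalan m + Nat.choose (2 * m) (m + 1) = Nat.choose (2 * m) m := by
  have h1 : (m + 1) * catalan m = Nat.choose (2 * m) m :=
    (Nat.centralBinom_eq_two_mul_choose m) ▸ succ_mul_catalan_eq_centralBinom m
  have h2 : Nat.choose (2 * m) (m + 1) * (m + 1) = Nat.choose (2 * m) m * (2 * m - m) :=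
    Nat.choose_succ_right_eq (2 * m) m
  have h3 : (m + 1) * (catalan m + Nat.choose (2 * m) (m + 1)) =
      (m + 1) * Nat.choose (2 * m) m := by
    have : 2 * m - m = m := by omega
    rw [this] at h2
    ring_nf
    ring_nf at h1 h2
    omega
  exact Nat.eq_of_mul_eq_mul_left (by omega) h3

lemma bal_two_mul_zero (m : ℕ) : bal (2 * m) 0 = catalan m := by
  have h := bal_add_choose (2 * m) 0 (by omega)
  rw [show (2 * m + 0) / 2 = m by omega] at h
  have := catalan_add_choose m
  omega
open Finset in
lemma bal_sum_step (p q M : ℕ) (hp : p ≤ M) :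
    ∑ k ∈ range (M + 1), bal (p + 1) k * bal q k =
      ∑ k ∈ range M, bal p k * bal q (k + 1) +
      ∑ k ∈ range M, bal q k * bal p (k + 1) := by
  rw [Finset.sum_range_succ' (fun k => bal (p + 1) k * bal q k) M]
  have h1 : ∀ k, bal (p + 1) (k + 1) * bal q (k + 1)
      = bal p k * bal q (k + 1) + bal p (k + 2) * bal q (k + 1) := by
    intro k; show (bal p k + bal p (k + 2)) * _ = _; ring
  simp only [h1, Finset.sum_add_distrib]
  have h2 : bal (p + 1) 0 * bal q 0 = bal p 1 * bal q 0 := rfl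
  rw [h2]
  have h3 : ∑ k ∈ range M, bal p (k + 2) * bal q (k + 1) + bal p 1 * bal q 0
      = ∑ k ∈ range (M + 1), bal p (k + 1) * bal q k :=
    (Finset.sum_range_succ' (fun k => bal p (k + 1) * bal q k) M).symm
  have h4 : ∑ k ∈ range (M + 1), bal p (k + 1) * bal q k
      = ∑ k ∈ range M, bal p (k + 1) * bal q k := by
    rw [Finset.sum_range_succ, bal_eq_zero_of_lt p (M + 1) (by omega)]
    simp
  have h5 : ∀ k, bal p (k + 1) * bal q k = bal q k * bal p (k + 1) := fun k => mul_comm _ _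
  simp only [h5] at h4 h3 ⊢
  omega

open Finset in
lemma bal_transfer (p q M : ℕ) (hp : p ≤ M) (hq : q ≤ M) :
    ∑ k ∈ range (M + 1), bal (p + 1) k * bal q k =
      ∑ k ∈ range (M + 1), bal p k * bal (q + 1) k := by
  rw [bal_sum_step p q M hp]
  have := bal_sum_step q p M hq
  have hc : ∀ k, bal (q + 1) k * bal p k = bal p k * bal (q + 1) k := fun k => mul_comm _ _
  simp only [hc] at this
  omega

open Finset in
lemma bal_conv : ∀ q p M, p + q ≤ M →
    ∑ k ∈ range (M + 1), bal p k * bal q k = bal (p + q) 0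
  | 0, p, M, h => by
      rw [Finset.sum_eq_single 0]
      · simp [bal]
      · intro k _ hk
        obtain ⟨k', rfl⟩ := Nat.exists_eq_succ_of_ne_zero hk
        simp [bal]
      · intro h0; exact absurd (Finset.mem_range.mpr (by omega)) h0
  | q + 1, p, M, h => by
      rw [← bal_transfer p q M (by omega) (by omega)]
      rw [bal_conv q (p + 1) M (by omega)]
      congr 1
      omega
open Finset in
lemma sum_even_aux (f : ℕ → ℕ) (hf : ∀ t, t % 2 = 1 → f t = 0) :
    ∀ M, ∑ t ∈ range (2 * M), f t = ∑ k ∈ range M, f (2 * k)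
  | 0 => rfl
  | M + 1 => by
      rw [show 2 * (M + 1) = (2 * M + 1) + 1 by ring, Finset.sum_range_succ,
        Finset.sum_range_succ, Finset.sum_range_succ, sum_even_aux f hf M,
        hf (2 * M + 1) (by omega)]
      omega

open Finset in
lemma bal_entry (n i j : ℕ) (hi : i ≤ n) (hj : j ≤ n) :
    ∑ k ∈ range (n + 1), bal (2 * i) (2 * k) * bal (2 * j) (2 * k) = catalan (i + j) := by
  have hext : ∑ k ∈ range (n + 1), bal (2 * i) (2 * k) * bal (2 * j) (2 * k)
      = ∑ k ∈ range (2 * n + 2), bal (2 * i) (2 * k) * bal (2 * j) (2 * k) := by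
    apply Finset.sum_subset (Finset.range_subset_range.mpr (by omega))
    intro k _ hk
    rw [bal_eq_zero_of_lt (2 * i) (2 * k) (by simp at hk; omega)]
    ring
  have heven : ∑ t ∈ range (2 * (2 * n + 2)), bal (2 * i) t * bal (2 * j) t
      = ∑ k ∈ range (2 * n + 2), bal (2 * i) (2 * k) * bal (2 * j) (2 * k) := by
    apply sum_even_aux
    intro t ht
    rw [bal_eq_zero_of_odd (2 * i) t (by omega)]
    ring
  have hconv := bal_conv (2 * j) (2 * i) (2 * (2 * n + 2) - 1) (by omega)
  rw [show 2 * (2 * n + 2) - 1 + 1 = 2 * (2 * n + 2) by omega] at hconv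
  rw [hext, ← heven, hconv, show 2 * i + 2 * j = 2 * (i + j) by ring,
    bal_two_mul_zero]

/-- The Hankel transform of the Catalan numbers is the all-ones sequence:
`det ((C_{i+j})_{0 ≤ i,j ≤ n}) = 1` for all `n`. -/
theorem catalan_hankel_transform (n : ℕ) :
    Matrix.det (Matrix.of fun i j : Fin (n + 1) => (catalan (i.1 + j.1) : ℤ)) = 1 := by
  set L : Matrix (Fin (n + 1)) (Fin (n + 1)) ℤ :=
    Matrix.of fun i k : Fin (n + 1) => (bal (2 * i.1) (2 * k.1) : ℤ) with hL
  have hfac : (Matrix.of fun i j : Fin (n + 1) => (catalan (i.1 + j.1) : ℤ))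
      = L * L.transpose := by
    ext i j
    simp only [Matrix.mul_apply, Matrix.transpose_apply, hL, Matrix.of_apply]
    have := bal_entry n i.1 j.1 (by omega) (by omega)
    rw [← this]
    rw [Fin.sum_univ_eq_sum_range (fun k => ((bal (2 * i.1) (2 * k) : ℤ) * (bal (2 * j.1) (2 * k) : ℤ)))]
    push_cast
    rfl
  have hdetL : L.det = 1 := by
    rw [Matrix.det_of_lowerTriangular L]
    · apply Finset.prod_eq_one
      intro i _
      simp [hL, bal_self]
    · intro i j hij
      have h2 : (i : ℕ) < (j : ℕ) := hij
      simp only [hL, Matrix.of_apply]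
      rw [bal_eq_zero_of_lt (2 * i.1) (2 * j.1) (by omega)]
      simp
  rw [hfac, Matrix.det_mul, Matrix.det_transpose, hdetL]
  ring
end

section
/- For every natural number n, the determinant of the (n+1)×(n+1) matrix whose (i,j) entry is r_{i+j} (for 0 ≤ i, j ≤ n) equals (−1)^{binomial(n+1,2)}, i.e., (−1)^{n(n+1)/2}. -/
open scoped Classical

noncomputable def rueppelSeq (n : ℕ) : ℤ :=
  if ∃ k : ℕ, n = 2 ^ k - 1 then 1 else 0

/-!
Write `N = s + 2b` with `s + b = 2^t` the largest power of two below `N`. On every antidiagonal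
`i + j ≥ 2^t` of the `N × N` Hankel matrix of the Rueppel sequence the entry is `1` exactly when
`i + j = 2^(t+1) - 1`. Reversing the last `2b` columns therefore turns the last `b` rows and the
columns `s, …, 2^t - 1` of the leading `2^t × 2^t` block into unit vectors on the diagonal, and
expanding along them leaves the `s × s` Hankel matrix: `h_N = (-1)^b h_s`. The exponents add up
because `(s + 2b).choose 2 ≡ s.choose 2 + b (mod 2)`.
-/

open Equiv Matrix

theorem Nat.choose_two_succ (n : ℕ) : (n + 1).choose 2 = n + n.choose 2 := by
  simp [Nat.choose_succ_succ]

section NegOnePow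

variable {M : Type*} [Monoid M] [HasDistribNeg M]

theorem neg_one_pow_choose_two_add_two (n : ℕ) :
    (-1 : M) ^ (n + 2).choose 2 = -(-1) ^ n.choose 2 := by
  rw [Nat.choose_two_succ, Nat.choose_two_succ,
    show n + 1 + (n + n.choose 2) = 2 * n + 1 + n.choose 2 by ring, pow_add, pow_succ, pow_mul]
  simp

theorem neg_one_pow_choose_two_add_two_mul (s b : ℕ) :
    (-1 : M) ^ (s + 2 * b).choose 2 = (-1) ^ b * (-1) ^ s.choose 2 := by
  induction b with
  | zero => simp
  | succ b ih => rw [mul_add_one, ← add_assoc, neg_one_pow_choose_two_add_two, ih, pow_succ]; simp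

end NegOnePow

namespace Fin

theorem sign_revPerm (n : ℕ) : Perm.sign (revPerm : Perm (Fin n)) = (-1) ^ n.choose 2 := by
  induction n with
  | zero => simp [Subsingleton.elim (revPerm : Perm (Fin 0)) 1]
  | succ n ih =>
    have h : finRotate (n + 1) * revPerm = Perm.decomposeFin.symm (0, revPerm) := by
      ext x
      induction x using Fin.cases <;> simp [rev_succ]
    have := congrArg Perm.sign h
    rw [Perm.sign_mul, sign_finRotate, Nat.succ_sub_one, Perm.decomposeFin.symm_sign, if_pos rfl,
      one_mul, ih] at this
    rw [Nat.choose_two_succ, pow_add, ← this, ← mul_assoc, Int.units_mul_self, one_mul]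

def tailRevPerm (m n : ℕ) : Perm (Fin (m + n)) :=
  finSumFinEquiv.permCongr (Perm.sumCongr 1 revPerm)

theorem val_tailRevPerm (m n : ℕ) (j : Fin (m + n)) :
    (tailRevPerm m n j : ℕ) = if (j : ℕ) < m then (j : ℕ) else 2 * m + n - 1 - j := by
  induction j using Fin.addCases with
  | left i => simp [tailRevPerm, Equiv.permCongr_apply]
  | right i => simp [tailRevPerm, Equiv.permCongr_apply]; omega

theorem sign_tailRevPerm (m n : ℕ) :
    Perm.sign (tailRevPerm m n) = Perm.sign (revPerm : Perm (Fin n)) := by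
  simp [tailRevPerm]

end Fin

namespace Matrix

variable {R : Type*} [CommRing R]

theorem det_eq_det_submatrix_castLE_of_row_eq_one {m N : ℕ} (h : m ≤ N)
    (M : Matrix (Fin N) (Fin N) R)
    (hM : ∀ i j : Fin N, m ≤ (i : ℕ) → M i j = (1 : Matrix _ _ R) i j) :
    M.det = (M.submatrix (Fin.castLE h) (Fin.castLE h)).det := by
  have hlow : toSquareBlockProp M (fun i => ¬(i : ℕ) < m) = 1 := by
    ext i j
    simp [toSquareBlockProp, toBlock, hM _ _ (not_lt.1 i.2), one_apply, Subtype.ext_iff]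
  rw [twoBlockTriangular_det M (fun i => (i : ℕ) < m), hlow, det_one, mul_one,
    ← det_submatrix_equiv_self (Fin.castLEquiv h)]
  · rfl
  · intro i hi j hj
    rw [hM i j (not_lt.1 hi), one_apply_ne]
    exact fun hij => hi (hij ▸ hj)

theorem det_eq_det_submatrix_castLE_of_col_eq_one {m N : ℕ} (h : m ≤ N)
    (M : Matrix (Fin N) (Fin N) R)
    (hM : ∀ i j : Fin N, m ≤ (j : ℕ) → M i j = (1 : Matrix _ _ R) i j) :
    M.det = (M.submatrix (Fin.castLE h) (Fin.castLE h)).det := by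
  rw [← det_transpose, det_eq_det_submatrix_castLE_of_row_eq_one h, ← det_transpose]
  · rfl
  · intro i j hi
    rw [transpose_apply, hM j i hi, ← transpose_apply (1 : Matrix _ _ R), transpose_one]

end Matrix

def hankelMatrix {R : Type*} (a : ℕ → R) (n : ℕ) : Matrix (Fin n) (Fin n) R :=
  Matrix.of fun i j => a (i + j)

theorem det_hankelMatrix_add_two_mul {R : Type*} [CommRing R] (a : ℕ → R) (s b : ℕ)
    (ha : ∀ k, s + b ≤ k → k + 1 < 2 * (s + 2 * b) →
      a k = if k + 1 = 2 * (s + b) then 1 else 0) :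
    (hankelMatrix a (s + 2 * b)).det = (-1) ^ b * (hankelMatrix a s).det := by
  set τ := Fin.tailRevPerm s (2 * b)
  set A' := (hankelMatrix a (s + 2 * b)).submatrix id τ
  -- Under either condition `i + τ j ≥ s + b`, so the entry is `1` iff `i + τ j = 2(s + b) - 1`,
  -- i.e. iff `i = j`.
  have hA' : ∀ i j : Fin (s + 2 * b), s + b ≤ (i : ℕ) ∨ (s ≤ (j : ℕ) ∧ (j : ℕ) < s + b) →
      A' i j = (1 : Matrix _ _ R) i j := by
    intro i j hij
    have hτ : (τ j : ℕ) = if (j : ℕ) < s then (j : ℕ) else 2 * s + 2 * b - 1 - j :=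
      Fin.val_tailRevPerm s (2 * b) j
    simp only [A', submatrix_apply, hankelMatrix, of_apply, id, one_apply, Fin.ext_iff]
    rw [ha _ (by split_ifs at hτ <;> omega) (by omega)]
    congr 1
    apply propext
    split_ifs at hτ <;> omega
  have hsign : ((Perm.sign τ : ℤ) : R) = (-1) ^ b := by
    rw [Fin.sign_tailRevPerm, Fin.sign_revPerm]
    simpa using congrArg (fun u : ℤˣ => ((u : ℤ) : R)) (neg_one_pow_choose_two_add_two_mul 0 b)
  have hq : s + b ≤ s + 2 * b := by omega
  have hs : s ≤ s + b := by omega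
  have hcol : ∀ i j : Fin (s + b), s ≤ (j : ℕ) →
      A'.submatrix (Fin.castLE hq) (Fin.castLE hq) i j = (1 : Matrix _ _ R) i j := fun i j hj => by
    simpa [one_apply, Fin.ext_iff] using hA' (Fin.castLE hq i) (Fin.castLE hq j) (Or.inr ⟨hj, j.2⟩)
  calc (hankelMatrix a (s + 2 * b)).det = (-1) ^ b * A'.det := by
        rw [det_permute', hsign, ← mul_assoc, ← pow_add, Even.neg_one_pow ⟨b, rfl⟩, one_mul]
    _ = (-1) ^ b * (A'.submatrix (Fin.castLE hq) (Fin.castLE hq)).det := by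
        rw [det_eq_det_submatrix_castLE_of_row_eq_one hq A' fun i j hi => hA' i j (Or.inl hi)]
    _ = (-1) ^ b * ((A'.submatrix (Fin.castLE hq) (Fin.castLE hq)).submatrix
          (Fin.castLE hs) (Fin.castLE hs)).det := by
        rw [det_eq_det_submatrix_castLE_of_col_eq_one hs _ hcol]
    _ = (-1) ^ b * (hankelMatrix a s).det := by
        congr 2
        ext i j
        simp [A', hankelMatrix, τ, Fin.val_tailRevPerm]

theorem rueppelSeq_zero : rueppelSeq 0 = 1 :=
  if_pos ⟨0, rfl⟩

theorem rueppelSeq_eq_of_le_of_lt {t k : ℕ} (h₁ : 2 ^ t ≤ k) (h₂ : k + 1 < 2 ^ (t + 2)) :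
    rueppelSeq k = if k + 1 = 2 ^ (t + 1) then 1 else 0 := by
  unfold rueppelSeq
  congr 1
  apply propext
  constructor
  · rintro ⟨j, rfl⟩
    have hj : 1 ≤ 2 ^ j := Nat.one_le_two_pow
    have : t < j ∧ j < t + 2 := by
      constructor <;> apply (Nat.pow_lt_pow_iff_right (by norm_num : 1 < 2)).mp <;> omega
    obtain rfl : j = t + 1 := by omega
    omega
  · intro h
    exact ⟨t + 1, by omega⟩

theorem det_hankelMatrix_rueppelSeq (N : ℕ) :
    (hankelMatrix rueppelSeq N).det = (-1) ^ N.choose 2 := by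
  induction N using Nat.strong_induction_on with
  | _ N ih =>
  obtain hN | hN := lt_or_ge N 2
  · interval_cases N
    · simp
    · simp [hankelMatrix, rueppelSeq_zero]
  · set t := Nat.log 2 (N - 1)
    have h₁ : 2 ^ t < N := (Nat.pow_log_le_self 2 (by omega)).trans_lt (by omega)
    have h₂ : N - 1 < 2 ^ (t + 1) := Nat.lt_pow_succ_log_self (by norm_num) _
    rw [pow_succ] at h₂
    obtain ⟨s, b, rfl, hq⟩ : ∃ s b, N = s + 2 * b ∧ s + b = 2 ^ t :=
      ⟨2 * 2 ^ t - N, N - 2 ^ t, by omega, by omega⟩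
    have hwindow : ∀ k, s + b ≤ k → k + 1 < 2 * (s + 2 * b) →
        rueppelSeq k = if k + 1 = 2 * (s + b) then 1 else 0 := fun k hk hk' => by
      rw [rueppelSeq_eq_of_le_of_lt (t := t) (by omega) (by rw [pow_succ, pow_succ]; omega),
        pow_succ, ← hq, mul_comm]
    rw [det_hankelMatrix_add_two_mul _ s b hwindow, ih s (by omega),
      neg_one_pow_choose_two_add_two_mul]

/-- The Hankel transform of the Rueppel sequence is `(-1)^(binomial(n+1, 2))`. -/
theorem rueppel_hankel_transform (n : ℕ) :
    Matrix.det (Matrix.of fun i j : Fin (n + 1) => rueppelSeq (i.1 + j.1)) =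
      (-1 : ℤ) ^ Nat.choose (n + 1) 2 :=
  det_hankelMatrix_rueppelSeq (n + 1)
end

section
/- Let a_n be the coefficient of xⁿ in the formal power series 1 − x·r(x) over ℤ, and let b_n be the coefficient of xⁿ in 1 + x − x²·r(x²). Then for every n, det((b_{i+j})_{0≤i,j≤n}) = det((a_{i+j})_{0≤i,j≤n}); that is, the two sequences have the same Hankel transform. -/
/-!
Since `x·r(x) = ∑ₖ x^(2^k)` and every power of two other than `1` is even, the series
`1 + x - x²·r(x²)` is `1 - x·r(x)` evaluated at `-x`, so `b_m = (-1)^m a_m`. Rescaling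
`x ↦ c·x` turns the Hankel matrix `H` into `D H D` with `D = diag(c^i)`, and for `c = -1`
we have `det D ^ 2 = 1`.
-/

open scoped Classical

/-- The Rueppel power series `r(x) = ∑_{k≥0} x^(2^k - 1)` over `ℤ`. -/
noncomputable def rueppel : PowerSeries ℤ :=
  PowerSeries.mk fun n => if ∃ k : ℕ, n = 2 ^ k - 1 then 1 else 0

/-- The power series `r(x²) = ∑_{k≥0} x^(2^(k+1) - 2)` over `ℤ`. -/
noncomputable def rueppelSq : PowerSeries ℤ :=
  PowerSeries.mk fun n => if ∃ k : ℕ, n = 2 ^ (k + 1) - 2 then 1 else 0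

open PowerSeries

theorem Matrix.det_hankel_pow_mul {R : Type*} [CommRing R] (c : R) (a : ℕ → R) (n : ℕ) :
    Matrix.det (Matrix.of fun i j : Fin n => c ^ ((i : ℕ) + j) * a (i + j)) =
      (∏ i : Fin n, c ^ (i : ℕ)) ^ 2 * Matrix.det (Matrix.of fun i j : Fin n => a (i + j)) := by
  have hconj : (Matrix.of fun i j : Fin n => c ^ ((i : ℕ) + j) * a (i + j)) =
      Matrix.diagonal (fun i : Fin n => c ^ (i : ℕ)) *
        Matrix.of (fun i j : Fin n => a (i + j)) *
          Matrix.diagonal fun i : Fin n => c ^ (i : ℕ) := by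
    ext i j
    simp only [Matrix.mul_diagonal, Matrix.diagonal_mul, Matrix.of_apply, pow_add]
    ring
  rw [hconj, Matrix.det_mul, Matrix.det_mul, Matrix.det_diagonal]
  ring

theorem Matrix.det_hankel_pow_mul_of_sq_eq_one {R : Type*} [CommRing R] {c : R}
    (hc : c ^ 2 = 1) (a : ℕ → R) (n : ℕ) :
    Matrix.det (Matrix.of fun i j : Fin n => c ^ ((i : ℕ) + j) * a (i + j)) =
      Matrix.det (Matrix.of fun i j : Fin n => a (i + j)) := by
  rw [Matrix.det_hankel_pow_mul, ← Finset.prod_pow]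
  have hsq (i : Fin n) : (c ^ (i : ℕ)) ^ 2 = 1 := by
    rw [← pow_mul, mul_comm, pow_mul, hc, one_pow]
  simp [hsq]

theorem PowerSeries.coeff_X_pow_mul_mk_indicator {R : Type*} [Semiring R] {d : ℕ}
    {f : ℕ → ℕ} (hf : ∀ k, d ≤ f k) (m : ℕ) :
    coeff m (X ^ d * mk fun n => if ∃ k, n = f k - d then (1 : R) else 0) =
      if ∃ k, m = f k then 1 else 0 := by
  have hshift : (d ≤ m ∧ ∃ k, m - d = f k - d) ↔ ∃ k, m = f k := by
    constructor
    · rintro ⟨hm, k, hk⟩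
      exact ⟨k, by have := hf k; omega⟩
    · rintro ⟨k, rfl⟩
      exact ⟨hf k, k, rfl⟩
  rw [coeff_X_pow_mul', ← hshift]
  split_ifs <;> simp_all

theorem coeff_X_mul_rueppel (m : ℕ) :
    coeff m (X * rueppel) = if ∃ k, m = 2 ^ k then 1 else 0 := by
  rw [← pow_one X, rueppel]
  exact coeff_X_pow_mul_mk_indicator (f := fun k => 2 ^ k) (fun k => Nat.one_le_two_pow) m

theorem coeff_X_sq_mul_rueppelSq (m : ℕ) :
    coeff m (X ^ 2 * rueppelSq) = if ∃ k, m = 2 ^ (k + 1) then 1 else 0 := by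
  rw [rueppelSq]
  exact coeff_X_pow_mul_mk_indicator (f := fun k => 2 ^ (k + 1))
    (fun k => Nat.le_self_pow (Nat.succ_ne_zero k) 2) m

theorem rescale_neg_one_one_sub_X_mul_rueppel :
    rescale (-1) (1 - X * rueppel) = 1 + X - X ^ 2 * rueppelSq := by
  ext m
  simp only [coeff_rescale, map_sub, map_add, coeff_one, coeff_X, coeff_X_mul_rueppel,
    coeff_X_sq_mul_rueppelSq]
  by_cases hm : ∃ k, m = 2 ^ k
  · obtain ⟨_ | k, rfl⟩ := hm
    · have hpow : ∃ k, 1 = 2 ^ k := ⟨0, rfl⟩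
      have hodd : ¬∃ k, 1 = 2 ^ (k + 1) := fun ⟨k, hk⟩ => by omega
      simp [hpow, hodd]
    · have heven : Even (2 ^ (k + 1)) := (Nat.even_pow' k.succ_ne_zero).mpr even_two
      simp [heven.neg_one_pow]
  · have hodd : ¬∃ k, m = 2 ^ (k + 1) := fun ⟨k, hk⟩ => hm ⟨k + 1, hk⟩
    have hone : m ≠ 1 := fun h => hm ⟨0, h⟩
    rcases eq_or_ne m 0 with rfl | hzero <;> simp [*]

/-- The expansions of `1 - x·r(x)` and `1 + x - x²·r(x²)` have the same Hankel
transform. -/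
theorem hankel_transform_eq (n : ℕ) :
    Matrix.det (Matrix.of fun i j : Fin (n + 1) =>
        PowerSeries.coeff (i.1 + j.1)
          (1 + PowerSeries.X - PowerSeries.X ^ 2 * rueppelSq)) =
      Matrix.det (Matrix.of fun i j : Fin (n + 1) =>
        PowerSeries.coeff (i.1 + j.1) (1 - PowerSeries.X * rueppel)) := by
  rw [← rescale_neg_one_one_sub_X_mul_rueppel]
  simp only [coeff_rescale]
  exact Matrix.det_hankel_pow_mul_of_sq_eq_one (by norm_num) (fun m => coeff m _) (n + 1)
end

section
/- Work in the ring of formal power series over the polynomial ring ℤ[b]. Let S = (1 + b·x²·r(x⁴))·(1 + x + b·x³·r(x⁴))⁻¹, where r(x⁴) = ∑_{k≥0} x^{4·(2^k−1)}. Then for all n, k ≥ 0, the coefficient of bᵏ in the xⁿ-coefficient of S equals the x^{n+1}-coefficient (an integer) of (−(1+x)⁻¹)·(−x³·r(x⁴)·(1+x)⁻¹)ᵏ. In other words, the coefficient array of this polynomial sequence is the stretched Riordan array (−1/(1+x), −x³·r(x⁴)/(1+x)) with its first row removed. -/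
open scoped Classical

/-- The power series `r(x⁴) = ∑_{k≥0} x^(2^(k+2) - 4)` over `ℤ`. -/
noncomputable def rueppelQuart : PowerSeries ℤ :=
  PowerSeries.mk fun n => if ∃ k : ℕ, n = 2 ^ (k + 2) - 4 then 1 else 0

/-- The power series `r(x⁴) = ∑_{k≥0} x^(2^(k+2) - 4)` over `ℤ[b]`. -/
noncomputable def rueppelQuartP : PowerSeries (Polynomial ℤ) :=
  PowerSeries.mk fun n => if ∃ k : ℕ, n = 2 ^ (k + 2) - 4 then 1 else 0

/-!
Put `U = 1 + x` and `V = x³·r(x⁴) = x·(x²·r(x⁴))`. Multiplying `S·(U + bV) = 1 + b·x²·r(x⁴)`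
by `x` and subtracting it from `U + bV` gives `(1 - x·S)·(U + bV) = 1`. Writing `T_k ∈ ℤ⟦x⟧`
for the coefficient of `bᵏ` in `T = 1 - x·S`, this identity says `T₀·U = 1` and
`T_{k+1}·U + T_k·V = 0`, so `T_k = J·(-V·J)ᵏ`; and `[xⁿ] S_k = -[x^(n+1)] T_k`.
-/

namespace PowerSeries

variable {R : Type*} [CommRing R]

noncomputable def innerCoeff (k : ℕ) : PowerSeries (Polynomial R) →+ PowerSeries R where
  toFun f := mk fun n => (coeff n f).coeff k
  map_zero' := by ext; simp
  map_add' f g := by ext; simp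

@[simp]
theorem coeff_innerCoeff (k n : ℕ) (f : PowerSeries (Polynomial R)) :
    coeff n (innerCoeff k f) = (coeff n f).coeff k := by
  simp [innerCoeff]

theorem innerCoeff_mul_map_C (k : ℕ) (f : PowerSeries (Polynomial R)) (g : PowerSeries R) :
    innerCoeff k (f * map Polynomial.C g) = innerCoeff k f * g := by
  ext n
  simp only [coeff_innerCoeff, coeff_mul, Polynomial.finsetSum_coeff, coeff_map,
    Polynomial.coeff_mul_C]

theorem innerCoeff_zero_C_X_mul (f : PowerSeries (Polynomial R)) :
    innerCoeff 0 (C Polynomial.X * f) = 0 := by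
  ext n
  simp [Polynomial.mul_coeff_zero]

theorem innerCoeff_succ_C_X_mul (k : ℕ) (f : PowerSeries (Polynomial R)) :
    innerCoeff (k + 1) (C Polynomial.X * f) = innerCoeff k f := by
  ext n
  simp [Polynomial.coeff_X_mul]

theorem innerCoeff_one (k : ℕ) :
    innerCoeff k (1 : PowerSeries (Polynomial R)) = if k = 0 then 1 else 0 := by
  ext n
  rcases k with _ | k <;> rcases n with _ | n <;> simp [coeff_one, Polynomial.coeff_one]

theorem innerCoeff_eq_of_mul_eq_one {T : PowerSeries (Polynomial R)} {u v J : PowerSeries R}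
    (hT : T * (map Polynomial.C u + C Polynomial.X * map Polynomial.C v) = 1)
    (hJ : J * u = 1) (k : ℕ) :
    innerCoeff k T = J * (-(v * J)) ^ k := by
  have hT' : T * map Polynomial.C u + C Polynomial.X * (T * map Polynomial.C v) = 1 := by
    rw [← hT]; ring
  induction k with
  | zero =>
    have h0 := congrArg (innerCoeff 0) hT'
    rw [map_add, innerCoeff_mul_map_C, innerCoeff_zero_C_X_mul, add_zero, innerCoeff_one,
      if_pos rfl] at h0
    simpa using left_inv_eq_right_inv h0 (mul_comm J u ▸ hJ)
  | succ k ih =>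
    have hk := congrArg (innerCoeff (k + 1)) hT'
    rw [map_add, innerCoeff_mul_map_C, innerCoeff_succ_C_X_mul, innerCoeff_mul_map_C, ih,
      innerCoeff_one, if_neg k.succ_ne_zero] at hk
    calc innerCoeff (k + 1) T = innerCoeff (k + 1) T * (J * u) := by rw [hJ, mul_one]
      _ = J * (-(v * J)) ^ (k + 1) := by linear_combination J * hk

end PowerSeries

open PowerSeries

theorem rueppelQuartP_eq_map :
    rueppelQuartP = map (Polynomial.C : ℤ →+* Polynomial ℤ) rueppelQuart := by
  ext n
  simp [rueppelQuartP, rueppelQuart, apply_ite]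

/-- The coefficient array of the polynomial sequence given by the expansion of
`(1 + b·x²·r(x⁴))/(1 + x + b·x³·r(x⁴))` over `ℤ[b]` is the stretched Riordan array
`(-1/(1+x), -x³·r(x⁴)/(1+x))` with its first row removed: the coefficient of `bᵏ` in
the `xⁿ`-coefficient equals `[x^(n+1)] (-(1+x)⁻¹)·(-x³·r(x⁴)·(1+x)⁻¹)ᵏ`, where `J`
denotes the inverse power series of `1 + x` over `ℤ`. -/
theorem stretched_riordan_array_of_generalized_rueppel
    (S : PowerSeries (Polynomial ℤ)) (J : PowerSeries ℤ)
    (hS : S * (1 + PowerSeries.X +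
          PowerSeries.C (Polynomial.X : Polynomial ℤ) * PowerSeries.X ^ 3 * rueppelQuartP)
        = 1 + PowerSeries.C (Polynomial.X : Polynomial ℤ) * PowerSeries.X ^ 2 * rueppelQuartP)
    (hJ : J * (1 + PowerSeries.X) = 1) (n k : ℕ) :
    (PowerSeries.coeff n S).coeff k =
      PowerSeries.coeff (n + 1)
        ((-J) * (-(PowerSeries.X ^ 3 * rueppelQuart * J)) ^ k) := by
  have hT : (1 - X * S) * (map Polynomial.C (1 + X) +
      C Polynomial.X * map Polynomial.C (X ^ 3 * rueppelQuart)) = 1 := by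
    simp only [map_add, map_one, map_mul, map_pow, map_X, ← rueppelQuartP_eq_map]
    linear_combination (-X) * hS
  calc (coeff n S).coeff k = -coeff (n + 1) (innerCoeff k (1 - X * S)) := by
        simp [coeff_succ_X_mul, coeff_one]
    _ = _ := by
        rw [innerCoeff_eq_of_mul_eq_one hT hJ, neg_mul, map_neg]
end

section
/- Define the integer sequence a by a_0 = 1 and a_{n+1} = −C_n for n ≥ 0 (the expansion of 1 − x·c(x) = 1/c(x)). Then for every n, det((a_{i+j})_{0≤i,j≤n}) = (−1)^n·(n+1). -/
/-!
Let `T` be the Catalan triangle (lower unitriangular, first column `C_i`) and `J` the Jacobi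
matrix of the Catalan numbers (tridiagonal, diagonal `1, 2, 2, …`, off-diagonal entries `1`).
Row `i + 1` of `T` is row `i` of `T` times `J`; as `J` is symmetric this moves a factor from one
row index to the other in `∑ₗ T i l * T j l`, which is therefore `C_{i+j}`. The matrix
`W k l = (-1)^(k+l) (max k l + 1)` satisfies `J W = -1`, so `T W Tᵀ` has entries `-C_{i+j-1}`
away from the corner `(0, 0)`, where it is `1`: it is the Hankel matrix of `a`. Adding to each row
of `W` the next one makes it lower triangular with diagonal `-1, …, -1, n + 1`.
-/

open Finset
open scoped Matrix

-- `C(2i, i+k)` rather than `C(2i, i-k)`, so that the entries vanish for `k > i`.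
def catalanTriangle (i k : ℕ) : ℤ := (2 * i).choose (i + k) - (2 * i).choose (i + k + 1)

theorem catalanTriangle_eq_zero_of_lt {i k : ℕ} (h : i < k) : catalanTriangle i k = 0 := by
  simp [catalanTriangle, Nat.choose_eq_zero_of_lt, show 2 * i < i + k by omega,
    show 2 * i < i + k + 1 by omega]

theorem catalanTriangle_self (i : ℕ) : catalanTriangle i i = 1 := by
  simp [catalanTriangle, ← two_mul]

theorem catalanTriangle_zero_right (i : ℕ) : catalanTriangle i 0 = catalan i := by
  have hcat : ((i + 1 : ℕ) : ℤ) * catalan i = (2 * i).choose i := by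
    exact_mod_cast succ_mul_catalan_eq_centralBinom i
  have hsucc : ((2 * i).choose (i + 1) : ℤ) * (i + 1) = (2 * i).choose i * i := by
    exact_mod_cast (Nat.choose_succ_right_eq (2 * i) i).trans (by rw [show 2 * i - i = i by omega])
  refine mul_left_cancel₀ (show ((i + 1 : ℕ) : ℤ) ≠ 0 by positivity) ?_
  rw [hcat, catalanTriangle, add_zero]
  push_cast
  linear_combination -hsucc

theorem Nat.choose_add_two_add_two (n m : ℕ) :
    (n + 2).choose (m + 2) = n.choose m + 2 * n.choose (m + 1) + n.choose (m + 2) := by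
  simp only [Nat.choose_succ_succ]; ring

theorem catalanTriangle_succ_succ (i k : ℕ) :
    catalanTriangle (i + 1) (k + 1) =
      catalanTriangle i k + 2 * catalanTriangle i (k + 1) + catalanTriangle i (k + 2) := by
  simp only [catalanTriangle, show 2 * (i + 1) = 2 * i + 2 by ring,
    show i + 1 + (k + 1) = i + k + 2 by ring,
    Nat.choose_add_two_add_two]
  push_cast; ring_nf

theorem catalanTriangle_succ_zero (i : ℕ) :
    catalanTriangle (i + 1) 0 = catalanTriangle i 0 + catalanTriangle i 1 := by
  have h₁ : (2 * i + 2).choose (i + 1) = 2 * (2 * i + 1).choose (i + 1) := by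
    rw [Nat.choose_succ_succ, Nat.choose_symm_half]; ring
  have h₂ : (2 * i + 2).choose (i + 2) =
      (2 * i + 1).choose (i + 1) + (2 * i + 1).choose (i + 2) :=
    Nat.choose_succ_succ _ _
  simp only [catalanTriangle, show 2 * (i + 1) = 2 * i + 2 by ring, h₁, h₂,
    Nat.choose_succ_succ' (2 * i) i, Nat.choose_succ_succ' (2 * i) (i + 1)]
  push_cast; ring_nf

theorem sum_range_catalanTriangle_mul {i N : ℕ} (hN : i < N) (g : ℕ → ℤ) :
    ∑ l ∈ range N, catalanTriangle i l * g l =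
      ∑ l ∈ range (i + 1), catalanTriangle i l * g l := by
  refine (sum_subset (range_subset_range.2 hN) fun l _ hl => ?_).symm
  rw [catalanTriangle_eq_zero_of_lt (by simpa using hl), zero_mul]

-- The Jacobi matrix of the moment sequence `C_n`; `negCatalanJacobiInv` below is `-J⁻¹`
-- as infinite matrices.
def catalanJacobi (l k : ℕ) : ℤ :=
  if l = k then (if k = 0 then 1 else 2) else if l = k + 1 ∨ k = l + 1 then 1 else 0

theorem catalanJacobi_comm (l k : ℕ) : catalanJacobi l k = catalanJacobi k l := by
  unfold catalanJacobi; grind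

theorem catalanJacobi_zero_right (l : ℕ) :
    catalanJacobi l 0 = (if l = 0 then 1 else 0) + (if l = 1 then 1 else 0) := by
  unfold catalanJacobi; grind

theorem catalanJacobi_succ_right (l k : ℕ) :
    catalanJacobi l (k + 1) =
      (if l = k then 1 else 0) + (if l = k + 1 then 2 else 0) + (if l = k + 2 then 1 else 0) := by
  unfold catalanJacobi; grind

theorem sum_range_mul_catalanJacobi {N k : ℕ} (hk : k + 1 < N) (g : ℕ → ℤ) :
    ∑ l ∈ range N, g l * catalanJacobi l k =
      if k = 0 then g 0 + g 1 else g (k - 1) + 2 * g k + g (k + 1) := by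
  cases k with
  | zero => simp [catalanJacobi_zero_right, mul_add, sum_add_distrib, hk, show 0 < N by omega]
  | succ k =>
    simp [catalanJacobi_succ_right, mul_add, sum_add_distrib, show k < N by omega,
      show k + 1 < N by omega, hk, mul_comm]

theorem sum_range_catalanTriangle_mul_catalanJacobi {i N : ℕ} (hi : i < N) (k : ℕ) :
    ∑ l ∈ range N, catalanTriangle i l * catalanJacobi l k = catalanTriangle (i + 1) k := by
  rw [sum_range_catalanTriangle_mul hi,
    ← sum_range_catalanTriangle_mul (show i < i + k + 2 by omega),
    sum_range_mul_catalanJacobi (by omega)]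
  cases k with
  | zero => simp [catalanTriangle_succ_zero]
  | succ k => simp [catalanTriangle_succ_succ]

theorem sum_range_catalanTriangle_succ_mul {i N : ℕ} (hi : i < N) (g : ℕ → ℤ) :
    ∑ k ∈ range N, catalanTriangle (i + 1) k * g k =
      ∑ l ∈ range N, catalanTriangle i l * ∑ k ∈ range N, catalanJacobi l k * g k := by
  simp_rw [← sum_range_catalanTriangle_mul_catalanJacobi hi, sum_mul, mul_sum, mul_assoc]
  exact sum_comm

theorem sum_range_catalanJacobi_mul_catalanTriangle {j N : ℕ} (hj : j < N) (l : ℕ) :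
    ∑ k ∈ range N, catalanJacobi l k * catalanTriangle j k = catalanTriangle (j + 1) l := by
  rw [← sum_range_catalanTriangle_mul_catalanJacobi hj]
  exact sum_congr rfl fun k _ => by rw [catalanJacobi_comm, mul_comm]

theorem sum_range_catalanTriangle_mul_catalanTriangle_of_add_lt {i j N : ℕ} (h : i + j < N) :
    ∑ l ∈ range N, catalanTriangle i l * catalanTriangle j l = catalan (i + j) := by
  induction i generalizing j with
  | zero =>
    rw [sum_range_catalanTriangle_mul (by omega)]
    simp [catalanTriangle_self, catalanTriangle_zero_right]
  | succ i ih =>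
    simp_rw [sum_range_catalanTriangle_succ_mul (show i < N by omega),
      sum_range_catalanJacobi_mul_catalanTriangle (show j < N by omega),
      ih (show i + (j + 1) < N by omega)]
    ring_nf

theorem sum_range_catalanTriangle_mul_catalanTriangle {i N : ℕ} (hi : i < N) (j : ℕ) :
    ∑ l ∈ range N, catalanTriangle i l * catalanTriangle j l = catalan (i + j) := by
  rw [sum_range_catalanTriangle_mul hi,
    ← sum_range_catalanTriangle_mul (show i < i + j + 1 by omega),
    sum_range_catalanTriangle_mul_catalanTriangle_of_add_lt (by omega)]

def negCatalanJacobiInv (k l : ℕ) : ℤ := (-1) ^ (k + l) * ((max k l : ℕ) + 1)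

theorem negCatalanJacobiInv_comm (k l : ℕ) :
    negCatalanJacobiInv k l = negCatalanJacobiInv l k := by
  rw [negCatalanJacobiInv, negCatalanJacobiInv, add_comm, max_comm]

theorem negCatalanJacobiInv_zero_add_one (m : ℕ) :
    negCatalanJacobiInv 0 m + negCatalanJacobiInv 1 m = if 0 = m then -1 else 0 := by
  have hmax : ((max 0 m : ℕ) : ℤ) - (max 1 m : ℕ) = if 0 = m then -1 else 0 := by
    split_ifs <;> omega
  calc _ = (-1) ^ m * (((max 0 m : ℕ) : ℤ) - (max 1 m : ℕ)) := by
        simp only [negCatalanJacobiInv]; ring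
    _ = _ := by
      rw [hmax]
      split_ifs with h
      · simp [← h]
      · rw [mul_zero]

theorem negCatalanJacobiInv_second_diff (l m : ℕ) :
    negCatalanJacobiInv l m + 2 * negCatalanJacobiInv (l + 1) m + negCatalanJacobiInv (l + 2) m =
      if l + 1 = m then -1 else 0 := by
  have hmax : ((max l m : ℕ) : ℤ) - 2 * (max (l + 1) m : ℕ) + (max (l + 2) m : ℕ) =
      if l + 1 = m then 1 else 0 := by
    split_ifs <;> omega
  calc _ = (-1) ^ (l + m) *
        (((max l m : ℕ) : ℤ) - 2 * (max (l + 1) m : ℕ) + (max (l + 2) m : ℕ)) := by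
        simp only [negCatalanJacobiInv]; ring
    _ = _ := by
      rw [hmax]
      split_ifs with h
      · rw [← h, mul_one, Odd.neg_one_pow ⟨l, by ring⟩]
      · rw [mul_zero]

theorem negCatalanJacobiInv_add_succ (k m : ℕ) :
    negCatalanJacobiInv k m + negCatalanJacobiInv (k + 1) m =
      if m ≤ k then -(-1) ^ (k + m) else 0 := by
  have hmax : ((max k m : ℕ) : ℤ) - (max (k + 1) m : ℕ) = if m ≤ k then -1 else 0 := by
    split_ifs <;> omega
  calc _ = (-1) ^ (k + m) * (((max k m : ℕ) : ℤ) - (max (k + 1) m : ℕ)) := by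
        simp only [negCatalanJacobiInv]; ring
    _ = _ := by rw [hmax]; split_ifs <;> ring

theorem sum_range_catalanJacobi_mul_negCatalanJacobiInv {l N : ℕ} (hl : l + 1 < N) (m : ℕ) :
    ∑ k ∈ range N, catalanJacobi l k * negCatalanJacobiInv k m = if l = m then -1 else 0 := by
  rw [sum_congr rfl fun k _ => by rw [catalanJacobi_comm, mul_comm], sum_range_mul_catalanJacobi hl]
  cases l with
  | zero => simp [negCatalanJacobiInv_zero_add_one]
  | succ l => simp [negCatalanJacobiInv_second_diff]

theorem sum_range_catalanTriangle_succ_mul_negCatalanJacobiInv {j N : ℕ} (hj : j + 1 < N)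
    (m : ℕ) :
    ∑ l ∈ range N, catalanTriangle (j + 1) l * negCatalanJacobiInv l m =
      -catalanTriangle j m := by
  rw [sum_range_catalanTriangle_succ_mul (by omega), sum_range_catalanTriangle_mul (by omega),
    sum_congr rfl fun l hl => by
      rw [sum_range_catalanJacobi_mul_negCatalanJacobiInv (by simp at hl; omega)]]
  simp only [mul_ite, mul_neg, mul_one, mul_zero, sum_ite_eq', mem_range]
  split_ifs with hm
  · rfl
  · rw [catalanTriangle_eq_zero_of_lt (by omega), neg_zero]

def catalanInv : ℕ → ℤ
  | 0 => 1
  | n + 1 => -catalan n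

theorem sum_range_catalanTriangle_mul_negCatalanJacobiInv_mul_catalanTriangle {i j N : ℕ}
    (hi : i < N) (hj : j < N) :
    ∑ l ∈ range N, (∑ k ∈ range N, catalanTriangle i k * negCatalanJacobiInv k l) *
      catalanTriangle j l = catalanInv (i + j) := by
  rcases j with _ | j
  · rw [sum_congr rfl fun l _ => mul_comm _ _, sum_range_catalanTriangle_mul hj]
    rcases i with _ | i
    · simp [sum_range_catalanTriangle_mul hi, catalanTriangle_self, negCatalanJacobiInv,
        catalanInv]
    · simp [sum_range_catalanTriangle_succ_mul_negCatalanJacobiInv hi, catalanTriangle_self,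
        catalanTriangle_zero_right, catalanInv]
  · calc _ = ∑ k ∈ range N, catalanTriangle i k *
          ∑ l ∈ range N, catalanTriangle (j + 1) l * negCatalanJacobiInv l k := by
          simp_rw [sum_mul, mul_sum]
          rw [sum_comm]
          refine sum_congr rfl fun k _ => sum_congr rfl fun l _ => ?_
          rw [negCatalanJacobiInv_comm]
          ring
      _ = catalanInv (i + (j + 1)) := by
          simp [sum_range_catalanTriangle_succ_mul_negCatalanJacobiInv hj,
            sum_range_catalanTriangle_mul_catalanTriangle hi, catalanInv]

theorem catalanInv_hankel_eq (N : ℕ) :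
    (Matrix.of fun i j : Fin N => catalanInv (i + j)) =
      Matrix.of (fun i k : Fin N => catalanTriangle i k) *
        Matrix.of (fun k l : Fin N => negCatalanJacobiInv k l) *
          (Matrix.of fun i k : Fin N => catalanTriangle i k)ᵀ := by
  ext i j
  rw [Matrix.of_apply,
    ← sum_range_catalanTriangle_mul_negCatalanJacobiInv_mul_catalanTriangle i.2 j.2,
    Matrix.mul_apply, ← Fin.sum_univ_eq_sum_range]
  refine sum_congr rfl fun l _ => ?_
  rw [Matrix.mul_apply, ← Fin.sum_univ_eq_sum_range]
  rfl

theorem det_catalanTriangle (N : ℕ) :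
    (Matrix.of fun i k : Fin N => catalanTriangle i k).det = 1 := by
  refine (Matrix.det_of_isLowerTriangular _ fun i k (h : i < k) => ?_).trans ?_
  · exact catalanTriangle_eq_zero_of_lt h
  · simp [catalanTriangle_self]

theorem det_negCatalanJacobiInv (n : ℕ) :
    (Matrix.of fun k l : Fin (n + 1) => negCatalanJacobiInv k l).det = (-1) ^ n * (n + 1) := by
  set W : Matrix (Fin (n + 1)) (Fin (n + 1)) ℤ := Matrix.of fun k l => negCatalanJacobiInv k l
  set E : Matrix (Fin (n + 1)) (Fin (n + 1)) ℤ :=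
    Matrix.of fun k l => (if (l : ℕ) = k then 1 else 0) + (if (l : ℕ) = k + 1 then 1 else 0)
  have hE : E.det = 1 := by
    rw [Matrix.det_of_isUpperTriangular fun k l (h : l < k) => by
      simp [E, Fin.val_ne_of_ne h.ne, show (l : ℕ) ≠ k + 1 by omega]]
    simp [E]
  have hEW (k m : Fin (n + 1)) : (E * W) k m =
      if (k : ℕ) < n then (if m ≤ k then -(-1) ^ (k + m : ℕ) else 0) else W k m := by
    calc _ = ∑ l ∈ range (n + 1), ((if l = (k : ℕ) then 1 else 0) +
          (if l = (k : ℕ) + 1 then 1 else 0)) * negCatalanJacobiInv l m := by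
          rw [Matrix.mul_apply, ← Fin.sum_univ_eq_sum_range]; rfl
      _ = _ := by
        simp only [add_mul, ite_mul, one_mul, zero_mul, sum_add_distrib, sum_ite_eq', mem_range,
          k.2, if_true, add_lt_add_iff_right]
        by_cases hk : (k : ℕ) < n
        · simp only [hk, if_true, negCatalanJacobiInv_add_succ, Fin.le_iff_val_le_val]
        · simp only [hk, if_false, add_zero, W, Matrix.of_apply]
  calc W.det = (E * W).det := by rw [Matrix.det_mul, hE, one_mul]
    _ = ∏ k, (E * W) k k := Matrix.det_of_isLowerTriangular _ fun k m (h : k < m) => by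
      simp [hEW, show (k : ℕ) < n by omega, not_le.2 h]
    _ = (-1) ^ n * (n + 1) := by
      simp only [Fin.prod_univ_castSucc, hEW]
      simp [W, negCatalanJacobiInv, ← two_mul]

/-- The Hankel transform of the sequence `1, -C_0, -C_1, -C_2, …` (the expansion of
`1 - x·c(x) = 1/c(x)`) is `(-1)^n · (n+1)`. -/
theorem hankel_transform_one_sub_x_catalan (a : ℕ → ℤ)
    (h0 : a 0 = 1) (h : ∀ n : ℕ, a (n + 1) = -(catalan n : ℤ)) (n : ℕ) :
    Matrix.det (Matrix.of fun i j : Fin (n + 1) => a (i.1 + j.1)) =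
      (-1) ^ n * (n + 1) := by
  obtain rfl : a = catalanInv := funext fun m => by cases m <;> simp [catalanInv, h0, h]
  rw [catalanInv_hankel_eq, Matrix.det_mul, Matrix.det_mul, Matrix.det_transpose,
    det_catalanTriangle, det_negCatalanJacobiInv, one_mul, mul_one]
end

section
/- Define the integer sequence a by a_0 = 1, a_1 = −1, a_{2m} = C_{m−1} for m ≥ 1, and a_{2m+1} = 0 for m ≥ 1 (the expansion of 1 − x + x²·c(x²)). Then the Hankel transform satisfies det((a_{i+j})_{0≤i,j≤0}) = 1 and det((a_{i+j})_{0≤i,j≤n}) = 1 − n for all n ≥ 1; i.e., the Hankel transform is 1, 0, −1, −2, −3, −4, … with generating function (1−2x)/(1−x)². -/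
/-!
Put `b s = a (s + 2)`: by the reflection principle `b s` is the number of nonnegative `±1`
paths of length `s` from height `0` back to `0` (`C_m` for `s = 2m`, none for odd `s`). Let `L`
be the lower unitriangular matrix of the numbers `ballot i k` of such paths of length `i`
ending at height `k`. One more step of a path applies the adjacency operator `A` of the
half-line `ℕ`, which is symmetric; hence `L Lᵀ` is the Hankel matrix of `b`, and
`L u = (a 1, …, a n)` for the sign vector `u = (-1, 1, 1, -1, -1, 1, 1, …)`, which solves
`A u = δ₀`. Moving the index `0` last, the Hankel matrix of `a` becomes the bordered Gram matrix
`[[L Lᵀ, L u], [(L u)ᵀ, 1]]`, whose determinant is `det L ^ 2 * (1 - u ⬝ u) = 1 - n`.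
-/

open Finset Matrix

def ballot : ℕ → ℕ → ℕ
  | 0, 0 => 1
  | 0, _ + 1 => 0
  | n + 1, 0 => ballot n 1
  | n + 1, k + 1 => ballot n k + ballot n (k + 2)

theorem ballot_eq_zero_of_lt : ∀ {n k : ℕ}, n < k → ballot n k = 0
  | 0, _ + 1, _ => rfl
  | n + 1, k + 1, h => by
    rw [ballot, ballot_eq_zero_of_lt (by omega), ballot_eq_zero_of_lt (by omega)]

theorem ballot_eq_zero_of_odd : ∀ {n k : ℕ}, Odd (n + k) → ballot n k = 0
  | 0, 0, h => by simp at h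
  | 0, _ + 1, _ => rfl
  | n + 1, 0, h => ballot_eq_zero_of_odd (n := n) (k := 1) h
  | n + 1, k + 1, ⟨r, hr⟩ => by
    rw [ballot, ballot_eq_zero_of_odd ⟨r - 1, by omega⟩,
      ballot_eq_zero_of_odd ⟨r, by omega⟩]

theorem ballot_add_choose : ∀ {n t k : ℕ}, n = 2 * t + k →
    ballot n k + n.choose (t + k + 1) = n.choose t
  | 0, 0, 0, _ => rfl
  | 0, _ + 1, _, h | 0, 0, _ + 1, h | _ + 1, 0, 0, h => by omega
  | n + 1, t + 1, 0, h => by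
    have ih := ballot_add_choose (n := n) (t := t) (k := 1) (by omega)
    have := Nat.choose_succ_succ' n t
    have := Nat.choose_succ_succ' n (t + 1)
    simp only [ballot, add_zero] at *
    omega
  | n + 1, 0, k + 1, h => by
    obtain rfl : n = k := by omega
    have ih := ballot_add_choose (n := n) (t := 0) (k := n) (by omega)
    simp [ballot, ballot_eq_zero_of_lt (show n < n + 2 by omega)] at ih ⊢
    omega
  | n + 1, t + 1, k + 1, h => by
    have ih₁ := ballot_add_choose (n := n) (t := t + 1) (k := k) (by omega)
    have ih₂ := ballot_add_choose (n := n) (t := t) (k := k + 2) (by omega)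
    have := Nat.choose_succ_succ' n t
    have := Nat.choose_succ_succ' n (t + k + 2)
    simp only [ballot, show t + 1 + (k + 1) + 1 = t + k + 2 + 1 by omega,
      show t + (k + 2) + 1 = t + k + 2 + 1 by omega, show t + 1 + k + 1 = t + k + 2 by omega] at *
    omega

theorem ballot_two_mul_zero (m : ℕ) : ballot (2 * m) 0 = catalan m := by
  have hballot := ballot_add_choose (n := 2 * m) (t := m) (k := 0) rfl
  have hcat := succ_mul_catalan_eq_centralBinom m
  have hsucc := Nat.choose_succ_right_eq (2 * m) m
  rw [Nat.centralBinom_eq_two_mul_choose] at hcat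
  rw [show 2 * m - m = m by omega, add_zero] at *
  refine Nat.eq_of_mul_eq_mul_left m.succ_pos ?_
  nlinarith

theorem ballot_self (n : ℕ) : ballot n n = 1 := by
  simpa using ballot_add_choose (n := n) (t := 0) (k := n) (by omega)

def halfLineAdj {R : Type*} [Add R] (f : ℕ → R) : ℕ → R
  | 0 => f 1
  | k + 1 => f k + f (k + 2)

section Semiring

variable {R : Type*} [Semiring R]

theorem sum_range_halfLineAdj_mul (f g : ℕ → R) {N : ℕ} (hN : g N = 0) (hN' : g (N + 1) = 0) :
    ∑ k ∈ range (N + 1), halfLineAdj g k * f k =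
      ∑ k ∈ range (N + 1), g k * halfLineAdj f k := by
  simp only [sum_range_succ' _ N, halfLineAdj, add_mul, mul_add, sum_add_distrib]
  have hA : ∑ k ∈ range N, g (k + 1) * f (k + 2) + g 0 * f 1 =
      ∑ k ∈ range N, g k * f (k + 1) := by
    rw [← sum_range_succ' (fun k => g k * f (k + 1)), sum_range_succ, hN, zero_mul, add_zero]
  have hB : ∑ k ∈ range N, g (k + 2) * f (k + 1) + g 1 * f 0 =
      ∑ k ∈ range N, g (k + 1) * f k := by
    rw [← sum_range_succ' (fun k => g (k + 1) * f k), sum_range_succ, hN', zero_mul, add_zero]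
  rw [← hA, ← hB]
  abel

theorem ballot_zero_cast (k : ℕ) : (ballot 0 k : R) = if k = 0 then 1 else 0 := by
  cases k <;> simp [ballot]

theorem ballot_succ_cast_eq_halfLineAdj (n : ℕ) :
    (fun k => (ballot (n + 1) k : R)) = halfLineAdj fun k => (ballot n k : R) := by
  ext (_ | k) <;> simp [ballot, halfLineAdj]

theorem sum_range_ballot_succ_mul (f : ℕ → R) {i N : ℕ} (hi : i + 1 < N) :
    ∑ k ∈ range N, (ballot (i + 1) k : R) * f k =
      ∑ k ∈ range N, (ballot i k : R) * halfLineAdj f k := by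
  obtain ⟨M, rfl⟩ : ∃ M, N = M + 1 := ⟨N - 1, by omega⟩
  rw [← sum_range_halfLineAdj_mul, ← ballot_succ_cast_eq_halfLineAdj] <;>
    simp [ballot_eq_zero_of_lt (show i < M by omega),
      ballot_eq_zero_of_lt (show i < M + 1 by omega)]

theorem sum_range_ballot_zero_mul (f : ℕ → R) {N : ℕ} (hN : 0 < N) :
    ∑ k ∈ range N, (ballot 0 k : R) * f k = f 0 := by
  simp [ballot_zero_cast, hN]

theorem sum_range_ballot_mul_ballot {i N : ℕ} (j : ℕ) (hi : i < N) :
    ∑ k ∈ range N, (ballot i k : R) * ballot j k = ballot (i + j) 0 := by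
  induction i generalizing j with
  | zero => simp [sum_range_ballot_zero_mul _ hi]
  | succ i ih =>
    rw [sum_range_ballot_succ_mul _ hi, ← ballot_succ_cast_eq_halfLineAdj, ih (j + 1) (by omega),
      add_right_comm]
    rfl

end Semiring

def periodicSign : ℕ → ℤ
  | 0 => -1
  | 1 => 1
  | k + 2 => -periodicSign k

theorem periodicSign_mul_self : ∀ k, periodicSign k * periodicSign k = 1
  | 0 | 1 => rfl
  | k + 2 => by rw [periodicSign, neg_mul_neg, periodicSign_mul_self k]

theorem halfLineAdj_periodicSign : halfLineAdj periodicSign = fun k => if k = 0 then 1 else 0 := by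
  ext (_ | k) <;> simp [halfLineAdj, periodicSign]

theorem sum_range_ballot_succ_mul_periodicSign {s N : ℕ} (hs : s + 1 < N) :
    ∑ k ∈ range N, (ballot (s + 1) k : ℤ) * periodicSign k = ballot s 0 := by
  rw [sum_range_ballot_succ_mul _ hs, halfLineAdj_periodicSign]
  simp [show 0 < N by omega]

def ballotMatrix (n : ℕ) : Matrix (Fin n) (Fin n) ℤ := of fun i k => (ballot i k : ℤ)

theorem det_ballotMatrix (n : ℕ) : (ballotMatrix n).det = 1 := by
  rw [det_of_isLowerTriangular _ fun i k (h : i < k) => ?_]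
  · simp [ballotMatrix, ballot_self]
  · simp [ballotMatrix, ballot_eq_zero_of_lt h]

theorem ballotMatrix_mul_transpose (n : ℕ) :
    ballotMatrix n * (ballotMatrix n)ᵀ =
      of fun i j : Fin n => (ballot (i + j : ℕ) 0 : ℤ) := by
  ext i j
  simp only [mul_apply, transpose_apply, ballotMatrix, of_apply]
  rw [Fin.sum_univ_eq_sum_range (fun k => (ballot i k : ℤ) * ballot j k),
    sum_range_ballot_mul_ballot _ i.isLt]

theorem ballotMatrix_mulVec_periodicSign (n : ℕ) (i : Fin n) :
    (ballotMatrix n *ᵥ fun k => periodicSign k) i =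
      if (i : ℕ) = 0 then -1 else (ballot (i - 1 : ℕ) 0 : ℤ) := by
  simp only [mulVec, dotProduct, ballotMatrix, of_apply]
  rw [Fin.sum_univ_eq_sum_range (fun k => (ballot i k : ℤ) * periodicSign k)]
  obtain ⟨_ | s, hs⟩ := i
  · simpa [periodicSign] using sum_range_ballot_zero_mul (R := ℤ) periodicSign hs
  · simpa using sum_range_ballot_succ_mul_periodicSign hs

theorem det_fromBlocks_mul_transpose {m ι R : Type*} [Fintype m] [DecidableEq m] [Unique ι]
    [CommRing R] (L : Matrix m m R) (v : m → R) :
    (fromBlocks (L * Lᵀ) (replicateCol ι (L *ᵥ v)) (replicateRow ι (L *ᵥ v)) 1).det =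
      L.det ^ 2 * (1 - v ⬝ᵥ v) := by
  have hSchur : L * Lᵀ - replicateCol ι (L *ᵥ v) * replicateRow ι (L *ᵥ v) =
      L * (1 - replicateCol ι v * replicateRow ι v) * Lᵀ := by
    rw [replicateRow_mulVec, replicateCol_mulVec, transpose_mul, transpose_replicateCol]
    simp only [Matrix.mul_sub, Matrix.sub_mul, Matrix.mul_one, Matrix.mul_assoc]
  rw [det_fromBlocks_one₂₂, hSchur, det_mul, det_mul, det_transpose, det_one_sub_mul_comm,
    det_unique (1 - _), Matrix.sub_apply, one_apply_eq, replicateRow_mul_replicateCol_apply]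
  ring

def finSuccEquivSumUnit (n : ℕ) : Fin (n + 1) ≃ Fin n ⊕ Unit :=
  (finSuccEquiv n).trans (Equiv.optionEquivSumPUnit (Fin n))

theorem hankel_reindex_eq_fromBlocks (a : ℕ → ℤ) (h0 : a 0 = 1) (h1 : a 1 = -1)
    (htail : ∀ s, a (s + 2) = ballot s 0) (n : ℕ) :
    reindex (finSuccEquivSumUnit n) (finSuccEquivSumUnit n)
        (of fun i j : Fin (n + 1) => a (i + j)) =
      fromBlocks (ballotMatrix n * (ballotMatrix n)ᵀ)
        (replicateCol Unit (ballotMatrix n *ᵥ fun k => periodicSign k))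
        (replicateRow Unit (ballotMatrix n *ᵥ fun k => periodicSign k)) 1 := by
  have hshift : ∀ s : ℕ, a (s + 1) = if s = 0 then -1 else (ballot (s - 1) 0 : ℤ) := by
    rintro (_ | s)
    · exact h1
    · exact htail s
  ext (i | i) (j | j) <;> simp only [reindex_apply, submatrix_apply, finSuccEquivSumUnit]
  · simp [ballotMatrix_mul_transpose, ← htail, Nat.add_add_add_comm]
  all_goals simp [ballotMatrix_mulVec_periodicSign, h0, ← hshift]

/-- The Hankel transform of the sequence `1, -1, C_0, 0, C_1, 0, C_2, 0, …` (the
expansion of `1 - x + x²·c(x²)`) is `1, 0, -1, -2, -3, …`, i.e., it equals `1` at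
`n = 0` and `1 - n` for `n ≥ 1`. -/
theorem hankel_transform_one_sub_x_add_xsq_catalanSq (a : ℕ → ℤ)
    (h0 : a 0 = 1) (h1 : a 1 = -1)
    (heven : ∀ m : ℕ, 1 ≤ m → a (2 * m) = (catalan (m - 1) : ℤ))
    (hodd : ∀ m : ℕ, 1 ≤ m → a (2 * m + 1) = 0) (n : ℕ) :
    Matrix.det (Matrix.of fun i j : Fin (n + 1) => a (i.1 + j.1)) =
      if n = 0 then 1 else 1 - (n : ℤ) := by
  have htail : ∀ s, a (s + 2) = ballot s 0 := by
    intro s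
    obtain ⟨m, rfl | rfl⟩ := Nat.even_or_odd' s
    · simpa [ballot_two_mul_zero, mul_add] using heven (m + 1) (by omega)
    · have hodd_ballot : ballot (2 * m + 1) 0 = 0 := ballot_eq_zero_of_odd (by simp)
      simpa [hodd_ballot, mul_add] using hodd (m + 1) (by omega)
  rw [← det_reindex_self (finSuccEquivSumUnit n), hankel_reindex_eq_fromBlocks a h0 h1 htail,
    det_fromBlocks_mul_transpose, det_ballotMatrix]
  simp [dotProduct, periodicSign_mul_self]
end

section
/- Let A be a formal power series over a commutative ring with coefficient sequence (a_n), and let B = A·(1 + x·A)⁻¹ with coefficient sequence (b_n) (the INVERT(−1) transform of (a_n), well-defined since 1 + x·A has constant term 1). Then for every n, det((b_{i+j})_{0≤i,j≤n}) = det((a_{i+j})_{0≤i,j≤n}); that is, a sequence and its INVERT(−1) transform have the same Hankel transform. -/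
open PowerSeries Finset Matrix

section Aux

variable {R : Type*} [CommRing R]

private lemma xmul_cancel {f g : PowerSeries R}
    (h : PowerSeries.X * f = PowerSeries.X * g) : f = g := by
  ext m
  have := congrArg (PowerSeries.coeff (m + 1)) h
  simpa [PowerSeries.coeff_succ_X_mul] using this

/-- shift of a power series by `k` -/
private noncomputable def sh (F : PowerSeries R) (k : ℕ) : PowerSeries R :=
  PowerSeries.mk fun l => PowerSeries.coeff (k + l) F

private lemma coeff_sh (F : PowerSeries R) (k l : ℕ) :
    PowerSeries.coeff l (sh F k) = PowerSeries.coeff (k + l) F := by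
  simp [sh]

private lemma sh_zero (F : PowerSeries R) : sh F 0 = F := by
  ext l; simp [coeff_sh]

private lemma sh_succ (F : PowerSeries R) (k : ℕ) :
    sh F k = PowerSeries.C (PowerSeries.coeff k F) + PowerSeries.X * sh F (k + 1) := by
  ext m
  cases m with
  | zero => simp [coeff_sh]
  | succ m =>
      simp only [coeff_sh, map_add, PowerSeries.coeff_succ_X_mul,
        PowerSeries.coeff_C, Nat.succ_ne_zero, if_false, zero_add]
      have h : k + (m + 1) = k + 1 + m := by omega
      rw [h]

private lemma c_zero (B : PowerSeries R) :
    PowerSeries.coeff 0 (1 - PowerSeries.X * B) = 1 := by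
  simp

private lemma c_succ (B : PowerSeries R) (m : ℕ) :
    PowerSeries.coeff (m + 1) (1 - PowerSeries.X * B) =
      -(PowerSeries.coeff m B) := by
  simp [PowerSeries.coeff_succ_X_mul, PowerSeries.coeff_one]

private lemma B_eq (A B : PowerSeries R) (hB : B * (1 + PowerSeries.X * A) = A) :
    A * (1 - PowerSeries.X * B) = B := by
  linear_combination -hB

private lemma key (A B : PowerSeries R) (hB : B * (1 + PowerSeries.X * A) = A) :
    ∀ i : ℕ, sh B i =
      (∑ k ∈ range (i + 1),
        PowerSeries.C (PowerSeries.coeff (i - k) (1 - PowerSeries.X * B)) * sh A k) *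
        (1 - PowerSeries.X * B) := by
  intro i
  induction i with
  | zero =>
      simp only [zero_add, range_one, sum_singleton, Nat.sub_zero, c_zero, _root_.map_one, one_mul, sh_zero]
      exact (B_eq A B hB).symm
  | succ i ih =>
      apply xmul_cancel
      have h1 : PowerSeries.X * sh B (i + 1) =
          sh B i - PowerSeries.C (PowerSeries.coeff i B) := by
        rw [sh_succ B i]; ring
      rw [h1]
      -- compute X * RHS
      have h2 : PowerSeries.X *
          ((∑ k ∈ range (i + 2),
            PowerSeries.C (PowerSeries.coeff (i + 1 - k) (1 - PowerSeries.X * B)) * sh A k) *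
            (1 - PowerSeries.X * B)) =
          ((∑ k ∈ range (i + 2),
            PowerSeries.C (PowerSeries.coeff (i + 1 - k) (1 - PowerSeries.X * B)) *
              (PowerSeries.X * sh A k)) * (1 - PowerSeries.X * B)) := by
        simp only [Finset.sum_mul, Finset.mul_sum]
        apply Finset.sum_congr rfl
        intro k _
        ring
      rw [h2]
      have h3 : (∑ k ∈ range (i + 2),
            PowerSeries.C (PowerSeries.coeff (i + 1 - k) (1 - PowerSeries.X * B)) *
              (PowerSeries.X * sh A k)) =
          PowerSeries.C (PowerSeries.coeff (i + 1) (1 - PowerSeries.X * B)) *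
              (PowerSeries.X * sh A 0) +
          ∑ k ∈ range (i + 1),
            PowerSeries.C (PowerSeries.coeff (i - k) (1 - PowerSeries.X * B)) *
              (sh A k - PowerSeries.C (PowerSeries.coeff k A)) := by
        rw [Finset.sum_range_succ']
        simp only [Nat.sub_zero]
        rw [add_comm]
        congr 1
        apply Finset.sum_congr rfl
        intro k _
        have : i + 1 - (k + 1) = i - k := by omega
        rw [this]
        congr 1
        have := sh_succ A k
        rw [this]; ring
      rw [h3]
      -- name the sums
      have hsplit : (PowerSeries.C (PowerSeries.coeff (i + 1) (1 - PowerSeries.X * B)) *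
              (PowerSeries.X * sh A 0) +
          ∑ k ∈ range (i + 1),
            PowerSeries.C (PowerSeries.coeff (i - k) (1 - PowerSeries.X * B)) *
              (sh A k - PowerSeries.C (PowerSeries.coeff k A))) =
          PowerSeries.C (-(PowerSeries.coeff i B)) * (PowerSeries.X * A) +
          (∑ k ∈ range (i + 1),
            PowerSeries.C (PowerSeries.coeff (i - k) (1 - PowerSeries.X * B)) * sh A k) -
          PowerSeries.C (PowerSeries.coeff i B) := by
        rw [c_succ, sh_zero]
        simp only [mul_sub]
        rw [Finset.sum_sub_distrib]
        have hsum : (∑ k ∈ range (i + 1),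
            PowerSeries.C (PowerSeries.coeff (i - k) (1 - PowerSeries.X * B)) *
              PowerSeries.C (PowerSeries.coeff k A)) =
            PowerSeries.C (PowerSeries.coeff i B) := by
          have hbi : PowerSeries.coeff i B =
              ∑ k ∈ range (i + 1),
                PowerSeries.coeff k A *
                  PowerSeries.coeff (i - k) (1 - PowerSeries.X * B) := by
            conv_lhs => rw [← B_eq A B hB]
            rw [PowerSeries.coeff_mul, Finset.Nat.sum_antidiagonal_eq_sum_range_succ_mk]
          rw [hbi, map_sum]
          apply Finset.sum_congr rfl
          intro k _
          rw [_root_.map_mul]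
          ring
        rw [hsum]
        ring
      rw [hsplit, ih]
      have hAC : A * (1 - PowerSeries.X * B) = B := B_eq A B hB
      have expand : (PowerSeries.C (-(PowerSeries.coeff i B)) * (PowerSeries.X * A) +
          (∑ k ∈ range (i + 1),
            PowerSeries.C (PowerSeries.coeff (i - k) (1 - PowerSeries.X * B)) * sh A k) -
          PowerSeries.C (PowerSeries.coeff i B)) * (1 - PowerSeries.X * B) =
          PowerSeries.C (-(PowerSeries.coeff i B)) * PowerSeries.X *
            (A * (1 - PowerSeries.X * B)) +
          (∑ k ∈ range (i + 1),
            PowerSeries.C (PowerSeries.coeff (i - k) (1 - PowerSeries.X * B)) * sh A k) *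
            (1 - PowerSeries.X * B) -
          PowerSeries.C (PowerSeries.coeff i B) * (1 - PowerSeries.X * B) := by ring
      rw [expand, hAC]
      simp only [map_neg]
      ring

/-- the entrywise identity -/
private lemma entry (A B : PowerSeries R) (hB : B * (1 + PowerSeries.X * A) = A) (i j : ℕ) :
    PowerSeries.coeff (i + j) B =
      ∑ l ∈ range (j + 1), ∑ k ∈ range (i + 1),
        PowerSeries.coeff (i - k) (1 - PowerSeries.X * B) *
          PowerSeries.coeff (k + l) A *
          PowerSeries.coeff (j - l) (1 - PowerSeries.X * B) := by
  have h := congrArg (PowerSeries.coeff j) (key A B hB i)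
  rw [coeff_sh] at h
  rw [h, PowerSeries.coeff_mul, Finset.Nat.sum_antidiagonal_eq_sum_range_succ_mk]
  apply Finset.sum_congr rfl
  intro l _
  simp only [map_sum, Finset.sum_mul]
  apply Finset.sum_congr rfl
  intro k _
  rw [PowerSeries.coeff_C_mul, coeff_sh]

end Aux

/-- A sequence and its INVERT(-1) transform have the same Hankel transform: if
`B = A/(1 + x·A)` as formal power series over a commutative ring, then the Hankel
determinants of the coefficient sequences of `A` and `B` agree. -/
theorem hankel_transform_invert_neg_one {R : Type*} [CommRing R]
    (A B : PowerSeries R) (hB : B * (1 + PowerSeries.X * A) = A) (n : ℕ) :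
    Matrix.det (Matrix.of fun i j : Fin (n + 1) => PowerSeries.coeff (i.1 + j.1) B) =
      Matrix.det (Matrix.of fun i j : Fin (n + 1) => PowerSeries.coeff (i.1 + j.1) A) := by
  classical
  set c : ℕ → R := fun m => PowerSeries.coeff m (1 - PowerSeries.X * B) with hc
  set L : Matrix (Fin (n + 1)) (Fin (n + 1)) R :=
    Matrix.of (fun i k : Fin (n + 1) => if (k : ℕ) ≤ (i : ℕ) then c (i.1 - k.1) else 0) with hL
  have hM : (Matrix.of fun i j : Fin (n + 1) => PowerSeries.coeff (i.1 + j.1) B)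
      = L * (Matrix.of fun i j : Fin (n + 1) => PowerSeries.coeff (i.1 + j.1) A) * Lᵀ := by
    ext i j
    rw [Matrix.mul_apply]
    simp only [Matrix.mul_apply, Matrix.transpose_apply, Matrix.of_apply, hL]
    have step1 : ∀ l : Fin (n + 1),
        (∑ k : Fin (n + 1),
          (if (k : ℕ) ≤ (i : ℕ) then c (i.1 - k.1) else 0) *
            PowerSeries.coeff (k.1 + l.1) A) =
        ∑ k ∈ range (i.1 + 1), c (i.1 - k) * PowerSeries.coeff (k + l.1) A := by
      intro l
      rw [Fin.sum_univ_eq_sum_range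
        (fun k => (if k ≤ (i : ℕ) then c (i.1 - k) else 0) * PowerSeries.coeff (k + l.1) A)]
      rw [← Finset.sum_subset (Finset.range_subset_range.2 (by omega : i.1 + 1 ≤ n + 1))]
      · apply Finset.sum_congr rfl
        intro k hk
        rw [if_pos (by simp at hk; omega)]
      · intro k _ hk
        rw [if_neg (by simp at hk; omega), zero_mul]
    calc PowerSeries.coeff (i.1 + j.1) B
        = ∑ l ∈ range (j.1 + 1), ∑ k ∈ range (i.1 + 1),
            c (i.1 - k) * PowerSeries.coeff (k + l) A * c (j.1 - l) :=
          entry A B hB i.1 j.1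
      _ = ∑ l : Fin (n + 1),
            (∑ k : Fin (n + 1),
              (if (k : ℕ) ≤ (i : ℕ) then c (i.1 - k.1) else 0) *
                PowerSeries.coeff (k.1 + l.1) A) *
            (if (l : ℕ) ≤ (j : ℕ) then c (j.1 - l.1) else 0) := by
          rw [Fin.sum_univ_eq_sum_range
            (fun l => (∑ k : Fin (n + 1),
              (if (k : ℕ) ≤ (i : ℕ) then c (i.1 - k.1) else 0) *
                PowerSeries.coeff (k.1 + l) A) *
              (if l ≤ (j : ℕ) then c (j.1 - l) else 0))]
          rw [← Finset.sum_subset (Finset.range_subset_range.2 (by omega : j.1 + 1 ≤ n + 1))]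
          · apply Finset.sum_congr rfl
            intro l hl
            have hl' : l ≤ (j : ℕ) := by simp at hl; omega
            rw [if_pos hl']
            rw [show (∑ k : Fin (n + 1),
              (if (k : ℕ) ≤ (i : ℕ) then c (i.1 - k.1) else 0) *
                PowerSeries.coeff (k.1 + l) A) =
              ∑ k ∈ range (i.1 + 1), c (i.1 - k) * PowerSeries.coeff (k + l) A from
              step1 ⟨l, by omega⟩]
            rw [Finset.sum_mul]
          · intro l _ hl
            rw [if_neg (by simp at hl; omega), mul_zero]
  rw [hM, Matrix.det_mul, Matrix.det_mul, Matrix.det_transpose]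
  have hdetL : L.det = 1 := by
    have hlt : L.BlockTriangular OrderDual.toDual := by
      intro i k h
      have hik : (i : Fin (n + 1)) < k := h
      simp only [hL, Matrix.of_apply]
      rw [if_neg (by exact not_le.2 hik)]
    rw [Matrix.det_of_lowerTriangular L hlt]
    apply Finset.prod_eq_one
    intro i _
    simp [hL, hc]
  rw [hdetL]
  ring
end

section
/- Define the integer sequence u by u_0 = 1, u_1 = 0, and for n ≥ 2: u_n = −(n−1) if n = 2^k − 1 for some k ≥ 2, and u_n = 2 otherwise. Then for every n ≥ 0, ∑_{i=0}^{n} u_i = 3 + 2·(n − 2^{⌊log₂(n+1)⌋}); equivalently the partial sums give the Josephus sequence A006257 with general term 2·(n + 1 − 2^{⌊log₂(n+1)⌋}) + 1. -/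
/-!
The right-hand side `J n = 3 + 2 (n - 2^⌊log₂(n+1)⌋)` is the Josephus sequence. As `n` grows
by one, `J` grows by `2`, except when `n + 1` becomes a power of two `2^k`: then the exponent
jumps and `J` falls back to `1`, a change of `1 - J (2^k - 2) = -(2^k - 2)`. So `u` is exactly
the difference sequence of `J` (with `u 0 = J 0 = 1`), and the partial sums telescope.
-/

namespace Nat

theorem log_succ_eq_of_forall_ne_pow {b n : ℕ} (hb : 1 < b) (hn : n ≠ 0)
    (h : ∀ k, n + 1 ≠ b ^ k) : log b (n + 1) = log b n :=
  ((log_eq_log_succ_iff hb hn).2 (h _).symm).symm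

theorem log_pow_sub_one {b k : ℕ} (hb : 1 < b) (hk : k ≠ 0) : log b (b ^ k - 1) = k - 1 := by
  have hlt : b ^ (k - 1) < b ^ k := Nat.pow_lt_pow_right hb (Nat.sub_one_lt hk)
  apply log_eq_of_pow_le_of_lt_pow
  · omega
  · rw [Nat.sub_add_cancel (Nat.one_le_iff_ne_zero.2 hk)]
    omega

end Nat

def josephus (n : ℕ) : ℤ := 3 + 2 * ((n : ℤ) - 2 ^ Nat.log 2 (n + 1))

theorem josephus_zero : josephus 0 = 1 := by
  simp [josephus]

theorem josephus_succ_sub_of_forall_ne_pow {n : ℕ} (h : ∀ k, n + 2 ≠ 2 ^ k) :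
    josephus (n + 1) - josephus n = 2 := by
  have hlog : Nat.log 2 (n + 1 + 1) = Nat.log 2 (n + 1) :=
    Nat.log_succ_eq_of_forall_ne_pow one_lt_two n.succ_ne_zero h
  simp only [josephus, hlog]
  push_cast
  ring

theorem josephus_succ_sub_of_eq_pow {n k : ℕ} (h : n + 2 = 2 ^ k) :
    josephus (n + 1) - josephus n = -n := by
  have hk : k ≠ 0 := by
    rintro rfl
    omega
  have hlog_succ : Nat.log 2 (n + 1 + 1) = k := by
    rw [h, Nat.log_pow one_lt_two]
  have hlog : Nat.log 2 (n + 1) = k - 1 := by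
    rw [show n + 1 = 2 ^ k - 1 by omega, Nat.log_pow_sub_one one_lt_two hk]
  have hpow : (2 : ℤ) ^ k = 2 * 2 ^ (k - 1) := by
    rw [← pow_succ', Nat.sub_add_cancel (Nat.one_le_iff_ne_zero.2 hk)]
  have hn : (n : ℤ) + 2 = 2 ^ k := by exact_mod_cast h
  simp only [josephus, hlog_succ, hlog]
  push_cast
  linarith

theorem eq_josephus_succ_sub_josephus (u : ℕ → ℤ) (h1 : u 1 = 0)
    (hpow : ∀ n : ℕ, 2 ≤ n → (∃ k : ℕ, 2 ≤ k ∧ n = 2 ^ k - 1) → u n = -((n : ℤ) - 1))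
    (hrest : ∀ n : ℕ, 2 ≤ n → ¬(∃ k : ℕ, 2 ≤ k ∧ n = 2 ^ k - 1) → u n = 2) (i : ℕ) :
    u (i + 1) = josephus (i + 1) - josephus i := by
  by_cases hi : ∃ k, i + 2 = 2 ^ k
  · obtain ⟨k, hk⟩ := hi
    rw [josephus_succ_sub_of_eq_pow hk]
    rcases Nat.eq_zero_or_pos i with rfl | hi_pos
    · simpa using h1
    · have hk2 : 2 ≤ k := (Nat.pow_lt_pow_iff_right (by norm_num)).1 (by omega : 2 ^ 1 < 2 ^ k)
      rw [hpow (i + 1) (by omega) ⟨k, hk2, by omega⟩]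
      push_cast
      ring
  · rw [not_exists] at hi
    have hi_pos : i ≠ 0 := by
      rintro rfl
      exact hi 1 rfl
    rw [josephus_succ_sub_of_forall_ne_pow hi, hrest (i + 1) (by omega)]
    rintro ⟨k, -, hk⟩
    exact hi k (by omega)

/-- Let `u` be the sequence with `u 0 = 1`, `u 1 = 0`, and for `n ≥ 2`:
`u n = -(n-1)` if `n = 2^k - 1` for some `k ≥ 2`, and `u n = 2` otherwise. Then the
partial sums satisfy `∑_{i=0}^n u i = 3 + 2·(n - 2^⌊log₂(n+1)⌋)`, the Josephus
sequence A006257 with general term `2·(n + 1 - 2^⌊log₂(n+1)⌋) + 1`. -/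
theorem partial_sums_josephus (u : ℕ → ℤ)
    (h0 : u 0 = 1) (h1 : u 1 = 0)
    (hpow : ∀ n : ℕ, 2 ≤ n → (∃ k : ℕ, 2 ≤ k ∧ n = 2 ^ k - 1) →
      u n = -((n : ℤ) - 1))
    (hrest : ∀ n : ℕ, 2 ≤ n → ¬(∃ k : ℕ, 2 ≤ k ∧ n = 2 ^ k - 1) → u n = 2) (n : ℕ) :
    ∑ i ∈ Finset.range (n + 1), u i = 3 + 2 * ((n : ℤ) - 2 ^ Nat.log 2 (n + 1)) := by
  calc ∑ i ∈ Finset.range (n + 1), u i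
      = ∑ i ∈ Finset.range n, (josephus (i + 1) - josephus i) + josephus 0 := by
        rw [Finset.sum_range_succ', h0, josephus_zero]
        simp only [eq_josephus_succ_sub_josephus u h1 hpow hrest]
    _ = josephus n := by
        rw [Finset.sum_range_sub]
        ring
end

section
/- Let b and c be rational numbers with c ≠ 0, and work in the ring of formal power series over ℚ. Let r_{b,c}(x) = 1 + c·x + b·∑_{k≥1} x^{2^{k+1}−1} (i.e., 1 + cx + b(x³ + x⁷ + x¹⁵ + ⋯)); it has constant term 1 and is invertible. Let G = (1 + (b/c)·∑_{k≥1} x^{2^{k+1}−2})·r_{b,c}(x)⁻¹ (i.e., the series (1 + (b/c)(x² + x⁶ + x¹⁴ + ⋯))/r_{b,c}(x)). Then r_{b,c}(x)·(1 − c·x·G) = 1; that is, r_{b,c}(x) = 1/(1 − c·x·G), identifying G as the first-level series r_{b,c}^{(1)}(x) in the Stieltjes continued fraction expansion of r_{b,c}(x). -/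
open scoped Classical

/-- The series `∑_{k≥1} x^(2^(k+1) - 1) = x³ + x⁷ + x¹⁵ + ⋯` over `ℚ`, i.e., the
series with exponents `2^k - 1` for `k ≥ 2`. -/
noncomputable def tailSeries : PowerSeries ℚ :=
  PowerSeries.mk fun n => if ∃ k : ℕ, 2 ≤ k ∧ n = 2 ^ k - 1 then 1 else 0

/-- The series `∑_{k≥1} x^(2^(k+1) - 2) = x² + x⁶ + x¹⁴ + ⋯` over `ℚ`, i.e., the
series with exponents `2^k - 2` for `k ≥ 2`. -/
noncomputable def tailSeriesSq : PowerSeries ℚ :=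
  PowerSeries.mk fun n => if ∃ k : ℕ, 2 ≤ k ∧ n = 2 ^ k - 2 then 1 else 0

/-!
Since `x · (x² + x⁶ + x¹⁴ + ⋯) = x³ + x⁷ + x¹⁵ + ⋯`, the numerator of `G` satisfies
`c·x·(1 + (b/c)(x² + x⁶ + ⋯)) = r_{b,c} - 1`. Hence `c·x·G = (r - 1)/r = 1 - 1/r`, and
`r·(1 - c·x·G) = 1` as soon as `r` is invertible, which holds because its constant term is `1`.
-/

open PowerSeries

theorem PowerSeries.mul_one_sub_sub_one_mul_inv {k : Type*} [Field k] {r : k⟦X⟧}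
    (hr : constantCoeff r ≠ 0) : r * (1 - (r - 1) * r⁻¹) = 1 := by
  have hinv : r * r⁻¹ = 1 := PowerSeries.mul_inv_cancel r hr
  linear_combination (1 - r) * hinv

theorem four_le_two_pow {k : ℕ} (hk : 2 ≤ k) : 4 ≤ 2 ^ k :=
  Nat.pow_le_pow_right two_pos hk

theorem X_mul_tailSeriesSq : X * tailSeriesSq = tailSeries := by
  ext n
  cases n with
  | zero =>
    rw [coeff_zero_X_mul, tailSeries, coeff_mk, if_neg]
    rintro ⟨k, hk, h⟩
    have := four_le_two_pow hk
    omega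
  | succ m =>
    rw [coeff_succ_X_mul, tailSeries, tailSeriesSq, coeff_mk, coeff_mk]
    congr 1
    refine propext (exists_congr fun k => and_congr_right fun hk => ?_)
    have := four_le_two_pow hk
    omega

theorem constantCoeff_tailSeries : constantCoeff tailSeries = 0 := by
  rw [← X_mul_tailSeriesSq, map_mul, constantCoeff_X, zero_mul]

/-- Let `r_{b,c}(x) = 1 + c·x + b·(x³ + x⁷ + x¹⁵ + ⋯)` and
`G = (1 + (b/c)·(x² + x⁶ + x¹⁴ + ⋯)) / r_{b,c}(x)`. Then
`r_{b,c}(x)·(1 - c·x·G) = 1`, identifying `G` as the first-level series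
`r_{b,c}^{(1)}(x)` in the Stieltjes continued fraction expansion of `r_{b,c}(x)`. -/
theorem generalized_rueppel_first_level (b c : ℚ) (hc : c ≠ 0) :
    (1 + PowerSeries.C c * PowerSeries.X + PowerSeries.C b * tailSeries) *
        (1 - PowerSeries.C c * PowerSeries.X *
          ((1 + PowerSeries.C (b / c) * tailSeriesSq) *
            (1 + PowerSeries.C c * PowerSeries.X + PowerSeries.C b * tailSeries)⁻¹))
      = 1 := by
  set r : PowerSeries ℚ := 1 + C c * X + C b * tailSeries
  have hr : constantCoeff r ≠ 0 := by simp [r, constantCoeff_tailSeries]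
  have numerator : C c * X * (1 + C (b / c) * tailSeriesSq) = r - 1 := by
    have hbc : C c * C (b / c) = C b := by rw [← map_mul, mul_div_cancel₀ b hc]
    simp only [r, ← X_mul_tailSeriesSq]
    linear_combination (X * tailSeriesSq) * hbc
  rw [← mul_assoc, numerator]
  exact mul_one_sub_sub_one_mul_inv hr
end
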